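/- arXiv:1602.02264 — 7 statements merged into one kernel-verified Lean document; each statement's English description precedes it below -/
import Mathlib

section
/- Let d, k, m be integers satisfying k, m ≥ d ≥ 2, and let n ≥ 1. Let X be a set with kn elements and let X = X₁ ∪ X₂ ∪ … ∪ X_m be an m-coloring of X. Then X admits a partition into n pairwise disjoint d-colorful k-tuples (i.e., a partition of X into n subsets, each of size k and each containing elements from at least d distinct color classes) if and only if for every t ∈ {1, …, d−1} and every subset I ⊆ {1, …, m} with |I| = t, we have Σ_{i∈I} |X_i| ≤ (k−d+t)n. -/
/-!
A part meeting at least `d` colours has at least `d - t` elements outside any `t` colour classes,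
hence at most `k - d + t` inside them; summing over the `n` parts gives the necessity of the
condition.

For sufficiency, list `X` colour class by colour class, the large classes (those with at least `n`
elements) last, and deal the list out into rows of length `n`: part `j` consists of the positions
congruent to `j` modulo `n`. A large class occupies at least `n` consecutive positions, so it meets
every part. If there are only `g < d` large classes, the condition for them says that they fill at
most the last `(k - d + g) n` positions, so the first `d - g` rows consist of small classes. A small
class spans fewer than `n` consecutive positions, so these rows give every part `d - g` further,
pairwise distinct colours.
-/

open Finset Function

theorem Nat.exists_mod_eq_of_le_lt_add (a : ℕ) {n j : ℕ} (hj : j < n) :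
    ∃ q, a ≤ q ∧ q < a + n ∧ q % n = j := by
  have := Nat.mod_lt a (by omega : 0 < n)
  have := Nat.mod_lt (j + n - a % n) (by omega : 0 < n)
  refine ⟨a + (j + n - a % n) % n, by omega, by omega, ?_⟩
  rw [Nat.add_mod_mod, ← Nat.mod_add_mod, Nat.add_sub_cancel' (by omega), Nat.add_mod_right,
    Nat.mod_eq_of_lt hj]

theorem Fintype.exists_equiv_fin_monotone {T β : Type*} [Fintype T] [LinearOrder β] {N : ℕ}
    (hN : Fintype.card T = N) (key : T → β) : ∃ e : Fin N ≃ T, Monotone (key ∘ e) :=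
  let e₀ := (Fintype.equivFinOfCardEq hN).symm
  ⟨(Tuple.sort (key ∘ e₀)).trans e₀, Tuple.monotone_sort (key ∘ e₀)⟩

theorem Fin.sub_le_card_filter_of_monotone {N : ℕ} {Q : Fin N → Prop} [DecidablePred Q]
    (hQ : Monotone Q) {p : Fin N} (hp : Q p) : N - p ≤ #{q | Q q} :=
  (Fin.card_Ici p).symm.le.trans <| card_le_card fun q hq =>
    mem_filter.mpr ⟨mem_univ q, hQ (mem_Ici.mp hq) hp⟩

theorem finProdFinEquiv_divNat_of_val_mod_eq {k n : ℕ} {p : Fin (k * n)} {j : Fin n}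
    (hp : (p : ℕ) % n = j) : finProdFinEquiv (p.divNat, j) = p := by
  have : (p.divNat, j) = finProdFinEquiv.symm p := Prod.ext rfl (Fin.ext hp.symm)
  rw [this, Equiv.apply_symm_apply]

def IsContiguous {γ : Type*} {N : ℕ} (v : Fin N → γ) : Prop :=
  ∀ ⦃p q r⦄, p ≤ q → q ≤ r → v p = v r → v q = v p

namespace IsContiguous

variable {γ : Type*} {N : ℕ} {v : Fin N → γ}

theorem of_monotone_comp {β : Type*} [PartialOrder β] {key : γ → β} (hkey : Injective key)
    (hv : Monotone (key ∘ v)) : IsContiguous v := fun _ _ _ hpq hqr hpr =>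
  hkey <| le_antisymm (by simpa [comp, hpr] using hv hqr) (hv hpq)

variable [DecidableEq γ]

theorem Icc_subset (hv : IsContiguous v) {p q : Fin N} (hpq : v p = v q) :
    Icc p q ⊆ ({r | v r = v p} : Finset (Fin N)) := fun r hr => by
  rw [mem_Icc] at hr
  simpa using hv hr.1 hr.2 hpq

theorem add_one_sub_le_card (hv : IsContiguous v) {p q : Fin N} (hpq : v p = v q) :
    (q : ℕ) + 1 - p ≤ #{r | v r = v p} :=
  (Fin.card_Icc p q).symm.le.trans (card_le_card (hv.Icc_subset hpq))

theorem exists_val_mod_eq (hv : IsContiguous v) {c : γ} {n j : ℕ} (hc : n ≤ #{r | v r = c})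
    (hj : j < n) : ∃ p, v p = c ∧ (p : ℕ) % n = j := by
  set S : Finset (Fin N) := {r | v r = c}
  have hS : S.Nonempty := card_pos.mp (by omega)
  have h₀ : v (S.min' hS) = c := (mem_filter.mp (S.min'_mem hS)).2
  have h₁ : v (S.max' hS) = c := (mem_filter.mp (S.max'_mem hS)).2
  have hlen : n ≤ (S.max' hS : ℕ) + 1 - S.min' hS := calc
    n ≤ #S := hc
    _ ≤ #(Icc (S.min' hS) (S.max' hS)) :=
      card_le_card fun r hr => mem_Icc.mpr ⟨S.min'_le r hr, S.le_max' r hr⟩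
    _ = _ := Fin.card_Icc _ _
  obtain ⟨q, hq₀, hq₁, hqj⟩ := Nat.exists_mod_eq_of_le_lt_add (S.min' hS) hj
  have hqN : q < N := by omega
  refine ⟨⟨q, hqN⟩, ?_, hqj⟩
  have := hv (p := S.min' hS) (q := ⟨q, hqN⟩) (r := S.max' hS) (Fin.le_def.mpr hq₀)
    (Fin.le_def.mpr (show q ≤ S.max' hS by omega)) (h₀.trans h₁.symm)
  rw [this, h₀]

end IsContiguous

namespace ColorfulPartition

variable {α γ : Type*} [DecidableEq α]

def colorsOf [Fintype γ] (C : γ → Finset α) (P : Finset α) : Finset γ :=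
  univ.filter fun c => (P ∩ C c).Nonempty

section Necessity

variable [Fintype γ] [DecidableEq γ] {C : γ → Finset α}

theorem card_inter_biUnion_add_card_colorsOf_sdiff_le
    (hC : Pairwise fun c c' => Disjoint (C c) (C c')) (P : Finset α) (I : Finset γ) :
    #(P ∩ I.biUnion C) + #(colorsOf C P \ I) ≤ #P := by
  have hsub : (colorsOf C P \ I).biUnion (fun c => P ∩ C c) ⊆ P \ I.biUnion C := by
    intro x hx
    simp only [mem_biUnion, mem_sdiff, mem_inter] at hx ⊢
    obtain ⟨c, ⟨-, hcI⟩, hxP, hxc⟩ := hx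
    refine ⟨hxP, fun ⟨c', hc'I, hxc'⟩ => hcI ?_⟩
    obtain rfl : c = c' := by_contra fun h => disjoint_left.mp (hC h) hxc hxc'
    exact hc'I
  have hpieces : #(colorsOf C P \ I) ≤ #((colorsOf C P \ I).biUnion fun c => P ∩ C c) :=
    card_le_card_biUnion (fun c _ c' _ h => (hC h).mono inter_subset_right inter_subset_right)
      fun c hc => (mem_filter.mp (mem_sdiff.mp hc).1).2
  have := card_le_card hsub
  have := card_inter_add_card_sdiff P (I.biUnion C)
  omega

theorem sum_card_le_of_colorful_partition {ι : Type*} [Fintype ι] {X : Finset α}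
    {P : ι → Finset α} {k d : ℕ} (hC : Pairwise fun c c' => Disjoint (C c) (C c'))
    (hCX : univ.biUnion C ⊆ X) (hP : Pairwise fun i j => Disjoint (P i) (P j))
    (hPX : univ.biUnion P = X) (hPcard : ∀ i, #(P i) = k)
    (hPcol : ∀ i, d ≤ #(colorsOf C (P i))) (I : Finset γ) :
    ∑ c ∈ I, #(C c) ≤ (k - d + #I) * Fintype.card ι := by
  have hIP : I.biUnion C ⊆ univ.biUnion P :=
    hPX ▸ (biUnion_subset_biUnion_of_subset_left C (subset_univ I)).trans hCX
  calc ∑ c ∈ I, #(C c) = #(I.biUnion C) := (card_biUnion fun c _ c' _ h => hC h).symm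
    _ = ∑ i, #(P i ∩ I.biUnion C) := by
      rw [← card_biUnion fun i _ j _ h => (hP h).mono inter_subset_left inter_subset_left,
        ← biUnion_inter, inter_eq_right.mpr hIP]
    _ ≤ ∑ _i : ι, (k - d + #I) := sum_le_sum fun i _ => by
      have := card_inter_biUnion_add_card_colorsOf_sdiff_le hC (P i) I
      have := le_card_sdiff I (colorsOf C (P i))
      have := hPcard i
      have := hPcol i
      omega
    _ = (k - d + #I) * Fintype.card ι := by rw [sum_const, card_univ, smul_eq_mul, mul_comm]

end Necessity

section Columns

variable {k n : ℕ} {X : Finset α} (e : Fin k × Fin n ≃ X)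

def columns (j : Fin n) : Finset α := univ.image fun l => (e (l, j) : α)

theorem card_columns (j : Fin n) : #(columns e j) = k := by
  rw [columns, card_image_of_injective _ fun l l' h => by simpa using e.injective (Subtype.ext h),
    card_univ, Fintype.card_fin]

theorem disjoint_columns {j j' : Fin n} (h : j ≠ j') :
    Disjoint (columns e j) (columns e j') := by
  simp only [columns, disjoint_left, mem_image, mem_univ, true_and, not_exists]
  rintro _ ⟨l, rfl⟩ l' hl'
  exact h (congrArg Prod.snd (e.injective (Subtype.ext hl'))).symm

theorem biUnion_columns : univ.biUnion (columns e) = X := by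
  ext x
  simp only [columns, mem_biUnion, mem_image, mem_univ, true_and]
  refine ⟨fun ⟨j, l, hl⟩ => hl ▸ (e (l, j)).2, fun hx => ?_⟩
  exact ⟨(e.symm ⟨x, hx⟩).2, (e.symm ⟨x, hx⟩).1, by simp⟩

end Columns

theorem mem_image_column_of_le_card {k n : ℕ} {v : Fin (k * n) → γ} [DecidableEq γ]
    (hv : IsContiguous v) {c : γ} (hc : n ≤ #{r | v r = c}) (j : Fin n) :
    c ∈ univ.image fun l : Fin k => v (finProdFinEquiv (l, j)) := by
  obtain ⟨p, rfl, hp⟩ := hv.exists_val_mod_eq hc j.isLt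
  exact mem_image.mpr ⟨p.divNat, mem_univ _, by rw [finProdFinEquiv_divNat_of_val_mod_eq hp]⟩

theorem le_card_image_column [Fintype γ] [DecidableEq γ] {k n d : ℕ} {v : Fin (k * n) → γ}
    (hv : IsContiguous v) (hbig : Monotone fun p => n ≤ #{r | v r = v p})
    (hhall : ∀ I : Finset γ, #I < d → #{p | v p ∈ I} ≤ (k - d + #I) * n) (hdk : d ≤ k)
    (j : Fin n) : d ≤ #(univ.image fun l : Fin k => v (finProdFinEquiv (l, j))) := by
  set big : Finset γ := {c | n ≤ #{r | v r = c}}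
  set column := univ.image fun l : Fin k => v (finProdFinEquiv (l, j))
  have hbig_column : big ⊆ column := fun c hc =>
    mem_image_column_of_le_card hv (mem_filter.mp hc).2 j
  by_cases hd : d ≤ #big
  · exact hd.trans (card_le_card hbig_column)
  push Not at hd
  set g := #big
  let row : Fin (d - g) → Fin (k * n) := fun i => finProdFinEquiv (Fin.castLE (by omega) i, j)
  have hrow : ∀ i, (row i : ℕ) = j + n * i := fun i => rfl
  have hrow_small : ∀ i, v (row i) ∉ big := fun i hi => by
    have hB : k * n - (j + n * i) ≤ #{p | v p ∈ big} := by
      rw [← hrow]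
      convert Fin.sub_le_card_filter_of_monotone hbig (mem_filter.mp hi).2 using 3
      simp only [big, mem_filter, mem_univ, true_and]
    have h₁ : #{p | v p ∈ big} ≤ (k - d + g) * n := hhall big hd
    have h₂ : n * i + n ≤ n * (d - g) := by
      rw [← Nat.mul_succ]; exact Nat.mul_le_mul_left n i.isLt
    have h₃ : (k - d + g) * n + n * (d - g) = k * n := by
      rw [mul_comm n, ← add_mul]; congr 1; omega
    have := j.isLt
    omega
  have hrow_inj : Injective (v ∘ row) := .of_lt_imp_ne fun i i' hii' heq => by
    have h₁ := hv.add_one_sub_le_card heq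
    have h₂ : #{r | v r = v (row i)} < n :=
      not_le.mp fun h => hrow_small i (mem_filter.mpr ⟨mem_univ _, h⟩)
    have h₃ : n * i + n ≤ n * i' := by rw [← Nat.mul_succ]; exact Nat.mul_le_mul_left n hii'
    rw [hrow, hrow] at h₁
    omega
  have hdisj : Disjoint big (univ.image (v ∘ row)) :=
    disjoint_right.mpr fun c hc => by
      obtain ⟨i, -, rfl⟩ := mem_image.mp hc
      exact hrow_small i
  have hsub : big ∪ univ.image (v ∘ row) ⊆ column :=
    union_subset hbig_column fun c hc => by
      obtain ⟨i, -, rfl⟩ := mem_image.mp hc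
      exact mem_image_of_mem _ (mem_univ _)
  calc d = g + #(univ.image (v ∘ row)) := by
        rw [card_image_of_injective _ hrow_inj, card_univ, Fintype.card_fin]; omega
    _ = #(big ∪ univ.image (v ∘ row)) := (card_union_of_disjoint hdisj).symm
    _ ≤ #column := card_le_card hsub

section Sufficiency

variable [Fintype γ] {X : Finset α} {C : γ → Finset α}

theorem exists_color_fun (hC : Pairwise fun c c' => Disjoint (C c) (C c'))
    (hXC : X ⊆ univ.biUnion C) : ∃ col : X → γ, ∀ (x : X) c, (x : α) ∈ C c ↔ col x = c := by
  have : ∀ x : X, ∃ c, (x : α) ∈ C c := fun x => by simpa using hXC x.2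
  choose col hcol using this
  exact ⟨col, fun x c => ⟨fun h => by_contra fun hne => disjoint_left.mp (hC hne) (hcol x) h,
    fun h => h ▸ hcol x⟩⟩

variable [DecidableEq γ]

theorem card_filter_comp_mem_eq_sum {N : ℕ} (hC : Pairwise fun c c' => Disjoint (C c) (C c'))
    (hCX : univ.biUnion C = X) {col : X → γ} (hcol : ∀ (x : X) c, (x : α) ∈ C c ↔ col x = c)
    (e : Fin N ≃ X) (I : Finset γ) : #{p | col (e p) ∈ I} = ∑ c ∈ I, #(C c) := calc
  #{p | col (e p) ∈ I} = #((I.biUnion C).subtype (· ∈ X)) :=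
    card_equiv e fun p => by simp [hcol]
  _ = #(I.biUnion C) := by
    rw [card_subtype, filter_true_of_mem fun x hx =>
      hCX ▸ biUnion_subset_biUnion_of_subset_left C (subset_univ I) hx]
  _ = ∑ c ∈ I, #(C c) := card_biUnion fun c _ c' _ h => hC h

theorem exists_colorful_partition_of_hall {k n d : ℕ}
    (hC : Pairwise fun c c' => Disjoint (C c) (C c')) (hCX : univ.biUnion C = X)
    (hX : #X = k * n) (hdk : d ≤ k)
    (hhall : ∀ I : Finset γ, #I < d → ∑ c ∈ I, #(C c) ≤ (k - d + #I) * n) :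
    ∃ P : Fin n → Finset α, (Pairwise fun i j => Disjoint (P i) (P j)) ∧ univ.biUnion P = X ∧
      (∀ i, #(P i) = k) ∧ ∀ i, d ≤ #(colorsOf C (P i)) := by
  obtain ⟨col, hcol⟩ := exists_color_fun hC hCX.ge
  let key : γ → Bool ×ₗ Fin (Fintype.card γ) :=
    fun c => toLex (decide (n ≤ #(C c)), Fintype.equivFin γ c)
  have hkey : Injective key := fun c c' h =>
    (Fintype.equivFin γ).injective (congrArg Prod.snd (toLex.injective h))
  obtain ⟨e, he⟩ := Fintype.exists_equiv_fin_monotone (by simpa using hX) (key ∘ col)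
  set v := col ∘ e
  have hcount : ∀ I, #{p | v p ∈ I} = ∑ c ∈ I, #(C c) :=
    card_filter_comp_mem_eq_sum hC hCX hcol e
  have hfiber : ∀ c, #{p | v p = c} = #(C c) := fun c => by simpa using hcount {c}
  have hbig : Monotone fun p => n ≤ #{r | v r = v p} := fun p q hpq hp => by
    have := Bool.le_iff_imp.mp (Prod.Lex.monotone_fst _ _ (he hpq))
    simp only [hfiber, comp_apply, key, ofLex_toLex, decide_eq_true_eq] at this hp ⊢
    exact this hp
  refine ⟨columns (finProdFinEquiv.trans e), fun i j => disjoint_columns _, biUnion_columns _,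
    card_columns _, fun j => ?_⟩
  calc d ≤ #(univ.image fun l => v (finProdFinEquiv (l, j))) :=
        le_card_image_column (.of_monotone_comp hkey he) hbig
          (fun I hI => hcount I ▸ hhall I hI) hdk j
    _ ≤ #(colorsOf C (columns (finProdFinEquiv.trans e) j)) := card_le_card fun c hc => by
        obtain ⟨l, -, rfl⟩ := mem_image.mp hc
        exact mem_filter.mpr ⟨mem_univ _, _, mem_inter.mpr
          ⟨mem_image_of_mem _ (mem_univ l), (hcol _ _).mpr rfl⟩⟩

end Sufficiency

end ColorfulPartition

theorem hall_type_condition_for_colorful_partition_general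
    {α : Type*} [DecidableEq α] (d k m n : ℕ)
    (hk : d ≤ k)
    (X : Finset α) (C : Fin m → Finset α)
    (hdisj : ∀ i j : Fin m, i ≠ j → Disjoint (C i) (C j))
    (hunion : Finset.univ.biUnion C = X)
    (hcard : X.card = k * n) :
    (∃ P : Fin n → Finset α,
        (∀ i j, i ≠ j → Disjoint (P i) (P j)) ∧
        Finset.univ.biUnion P = X ∧
        (∀ i, (P i).card = k) ∧
        (∀ i, d ≤ (Finset.univ.filter (fun c : Fin m => ((P i) ∩ C c).Nonempty)).card))
    ↔ (∀ t : ℕ, 1 ≤ t → t ≤ d - 1 → ∀ I : Finset (Fin m), I.card = t →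
        ∑ i ∈ I, (C i).card ≤ (k - d + t) * n) := by
  constructor
  · rintro ⟨P, hPdisj, hPunion, hPcard, hPcol⟩ t - - I rfl
    simpa using ColorfulPartition.sum_card_le_of_colorful_partition hdisj hunion.le hPdisj
      hPunion hPcard hPcol I
  · intro hcond
    have hhall : ∀ I : Finset (Fin m), #I < d → ∑ c ∈ I, #(C c) ≤ (k - d + #I) * n :=
      fun I hI => by
        rcases Nat.eq_zero_or_pos #I with h0 | hpos
        · simp [card_eq_zero.mp h0]
        · exact hcond _ hpos (by omega) I rfl
    exact ColorfulPartition.exists_colorful_partition_of_hall hdisj hunion hcard hk hhall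

theorem hall_type_condition_for_colorful_partition
    {α : Type*} [DecidableEq α] (d k m n : ℕ)
    (hd : 2 ≤ d) (hk : d ≤ k) (hm : d ≤ m) (hn : 1 ≤ n)
    (X : Finset α) (C : Fin m → Finset α)
    (hdisj : ∀ i j : Fin m, i ≠ j → Disjoint (C i) (C j))
    (hunion : Finset.univ.biUnion C = X)
    (hcard : X.card = k * n) :
    (∃ P : Fin n → Finset α,
        (∀ i j, i ≠ j → Disjoint (P i) (P j)) ∧
        Finset.univ.biUnion P = X ∧
        (∀ i, (P i).card = k) ∧
        (∀ i, d ≤ (Finset.univ.filter (fun c : Fin m => ((P i) ∩ C c).Nonempty)).card))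
    ↔ (∀ t : ℕ, 1 ≤ t → t ≤ d - 1 → ∀ I : Finset (Fin m), I.card = t →
        ∑ i ∈ I, (C i).card ≤ (k - d + t) * n) :=
  hall_type_condition_for_colorful_partition_general d k m n hk X C hdisj hunion hcard
end

section
/- Let d, k, m be integers satisfying d ≥ 2, k ≥ d + 1, and m ≥ 2d − 1, and let n ≥ 1. Let X be a set with kn elements and let X = X₁ ∪ X₂ ∪ … ∪ X_m be an m-coloring of X satisfying condition (★): for every t ∈ {1, …, d−1} and every subset I ⊆ {1, …, m} with |I| = t, Σ_{i∈I} |X_i| ≤ (k−d+t)n. Then there exist two distinct color classes such that the (m−1)-coloring of X obtained by merging them into a single color class still satisfies condition (★). -/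
/-!
Merge two smallest classes `X_i`, `X_j`. A set of `t` merged classes not containing the new
class is a set of old classes; otherwise it is `J ∪ {X_i ∪ X_j}` with `|J| = t - 1`. The
`m - t + 1` old classes outside `J` include `X_i` and `X_j`, so, these being the two smallest,
`(m - t + 1)(|X_i| + |X_j|) ≤ 2(kn - Σ_J |X_l|)`. For `t = 1` this gives
`|X_i| + |X_j| ≤ 2kn/m ≤ (k - d + 1)n` since `m ≥ 2d - 1`; for `t ≥ 2` it is combined with (★)
for `J` and with `m + t - 1 ≥ 2d`.
-/

open Finset

section Weights

variable {ι : Type*} {f : ι → ℕ} {i j : ι}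

theorem exists_two_smallest [Fintype ι] [DecidableEq ι] (f : ι → ℕ) (h : 1 < Fintype.card ι) :
    ∃ i j, i ≠ j ∧ (∀ l, f i ≤ f l) ∧ ∀ l, l ≠ i → f j ≤ f l := by
  have : Nonempty ι := Fintype.card_pos_iff.1 (by omega)
  obtain ⟨i, -, hi⟩ := exists_min_image univ f univ_nonempty
  have hne : (univ.erase i).Nonempty := by
    rw [← card_pos, card_erase_of_mem (mem_univ i), card_univ]
    omega
  obtain ⟨j, hj, hjmin⟩ := exists_min_image (univ.erase i) f hne
  exact ⟨i, j, (ne_of_mem_erase hj).symm, fun l ↦ hi l (mem_univ l),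
    fun l hl ↦ hjmin l (mem_erase.2 ⟨hl, mem_univ l⟩)⟩

variable [DecidableEq ι]

theorem card_mul_add_le_two_mul_sum (hi : ∀ l, f i ≤ f l) (hj : ∀ l, l ≠ i → f j ≤ f l)
    (hij : i ≠ j) {T : Finset ι} (hiT : i ∈ T) (hjT : j ∈ T) :
    #T * (f i + f j) ≤ 2 * ∑ l ∈ T, f l := by
  set T' := (T.erase i).erase j
  have hjT' : j ∈ T.erase i := mem_erase.2 ⟨hij.symm, hjT⟩
  have hsum : ∑ l ∈ T, f l = f i + f j + ∑ l ∈ T', f l := by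
    rw [← add_sum_erase T f hiT, ← add_sum_erase _ f hjT', add_assoc]
  have hcard : #T = #T' + 2 := by
    rw [← card_erase_add_one hiT, ← card_erase_add_one hjT']
  have hT' : #T' • (f i + f j) ≤ ∑ l ∈ T', 2 * f l := by
    refine card_nsmul_le_sum T' _ _ fun l hl ↦ ?_
    have hli : l ≠ i := ne_of_mem_erase (mem_of_mem_erase hl)
    linarith [hi l, hj l hli]
  rw [smul_eq_mul, ← mul_sum] at hT'
  rw [hcard, hsum]
  linarith

theorem sum_ite_eq_add_sum_erase {s : Finset ι} (h : i ∈ s) (f : ι → ℕ) (b : ℕ) :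
    ∑ l ∈ s, (if l = i then b else f l) = b + ∑ l ∈ s.erase i, f l := by
  simpa only [Function.update_apply, sdiff_singleton_eq_erase] using sum_update_of_mem h f b

end Weights

theorem two_mul_le_mul_sub_add_one {d k m : ℕ} (hd : 2 ≤ d) (hk : d < k) (hm : 2 * d - 1 ≤ m) :
    2 * k ≤ m * (k - d + 1) := by
  obtain ⟨d, rfl⟩ : ∃ d', d = d' + 2 := ⟨d - 2, by omega⟩
  obtain ⟨e, rfl⟩ : ∃ e, k = d + 2 + e + 1 := ⟨k - d - 3, by omega⟩
  rw [show d + 2 + e + 1 - (d + 2) + 1 = e + 2 by omega]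
  nlinarith [Nat.mul_le_mul_right (e + 2) (show 2 * d + 3 ≤ m by omega)]

theorem add_le_mul_of_mul_add_two_mul_le {q c n A B K : ℕ} (hq : 2 ≤ q)
    (h : q * A + 2 * B ≤ 2 * K) (hB : B + n ≤ c * n) (hK : 2 * K + 2 * n ≤ (q + 2 * c) * n) :
    A + B ≤ c * n := by
  obtain ⟨q, rfl⟩ : ∃ q', q = q' + 2 := ⟨q - 2, by omega⟩
  refine Nat.le_of_mul_le_mul_left ?_ (show 0 < q + 2 by omega)
  nlinarith [Nat.mul_le_mul_left q hB]

def StarCondition {ι : Type*} (d k n : ℕ) (w : ι → ℕ) : Prop :=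
  ∀ t, 1 ≤ t → t ≤ d - 1 → ∀ I : Finset ι, #I = t → ∑ l ∈ I, w l ≤ (k - d + t) * n

theorem add_add_sum_erase_le_of_two_smallest {ι : Type*} [Fintype ι] [DecidableEq ι]
    {f : ι → ℕ} {i j : ι} {d k n : ℕ} (hstar : StarCondition d k n f) (htotal : ∑ l, f l = k * n) (hk : d < k)
    (hm : 2 * d - 1 ≤ Fintype.card ι) (hi : ∀ l, f i ≤ f l) (hj : ∀ l, l ≠ i → f j ≤ f l)
    (hij : i ≠ j) {I : Finset ι} (hiI : i ∈ I) (hjI : j ∉ I) (hId : #I ≤ d - 1) :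
    f i + f j + ∑ l ∈ I.erase i, f l ≤ (k - d + #I) * n := by
  set J := I.erase i
  have hJ : #J + 1 = #I := card_erase_add_one hiI
  have hsum : ∑ l ∈ Jᶜ, f l + ∑ l ∈ J, f l = k * n := by rw [sum_compl_add_sum, htotal]
  have htwo : (Fintype.card ι - #J) * (f i + f j) ≤ 2 * ∑ l ∈ Jᶜ, f l := by
    rw [← card_compl]
    exact card_mul_add_le_two_mul_sum hi hj hij (by simp [J]) (by simp [J, hjI])
  rcases Nat.eq_zero_or_pos #J with hJ0 | hJpos
  · have hB : ∑ l ∈ J, f l = 0 := by rw [card_eq_zero.1 hJ0, sum_empty]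
    rw [hJ0, Nat.sub_zero] at htwo
    rw [hB, ← hJ, hJ0]
    refine Nat.le_of_mul_le_mul_left ?_ (show 0 < Fintype.card ι by omega)
    calc Fintype.card ι * (f i + f j + 0) ≤ 2 * k * n := by linarith
      _ ≤ Fintype.card ι * (k - d + (0 + 1)) * n :=
          Nat.mul_le_mul_right n (two_mul_le_mul_sub_add_one (by omega) hk hm)
      _ = _ := by ring
  · have hB := hstar #J hJpos (by omega) J rfl
    refine add_le_mul_of_mul_add_two_mul_le (q := Fintype.card ι - #J) (K := k * n) (by omega)
      (by linarith) ?_ ?_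
    · rw [← hJ]; linarith [hB]
    · calc 2 * (k * n) + 2 * n = (2 * k + 2) * n := by ring
        _ ≤ _ := Nat.mul_le_mul_right n (by omega)

theorem merging_colors_lemma_general
    {α : Type*} [DecidableEq α] (d k m n : ℕ)
    (hd : 2 ≤ d) (hk : d + 1 ≤ k) (hm : 2 * d - 1 ≤ m)
    (X : Finset α) (C : Fin m → Finset α)
    (hdisj : ∀ i j : Fin m, i ≠ j → Disjoint (C i) (C j))
    (hunion : Finset.univ.biUnion C = X)
    (hcard : X.card = k * n)
    (hstar : ∀ t : ℕ, 1 ≤ t → t ≤ d - 1 → ∀ I : Finset (Fin m), I.card = t →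
        ∑ i ∈ I, (C i).card ≤ (k - d + t) * n) :
    ∃ i j : Fin m, i ≠ j ∧
      -- the (m-1)-coloring obtained by merging classes `i` and `j` (indexed by
      -- `Fin m` with the index `j` removed, where class `i` becomes `C i ∪ C j`)
      -- still satisfies condition (★)
      (∀ t : ℕ, 1 ≤ t → t ≤ d - 1 → ∀ I : Finset (Fin m), j ∉ I → I.card = t →
        ∑ l ∈ I, (if l = i then (C i ∪ C j).card else (C l).card) ≤ (k - d + t) * n) := by
  set f : Fin m → ℕ := fun l ↦ #(C l)
  have htotal : ∑ l, f l = k * n := by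
    rw [← hcard, ← hunion, card_biUnion fun a _ b _ hab ↦ hdisj a b hab]
  obtain ⟨i, j, hij, hi, hj⟩ := exists_two_smallest f (by rw [Fintype.card_fin]; omega)
  refine ⟨i, j, hij, fun t ht htd I hjI hI ↦ ?_⟩
  rw [card_union_of_disjoint (hdisj i j hij)]
  by_cases hiI : i ∈ I
  · rw [sum_ite_eq_add_sum_erase hiI, ← hI]
    exact add_add_sum_erase_le_of_two_smallest hstar htotal hk (by rwa [Fintype.card_fin])
      hi hj hij hiI hjI (hI ▸ htd)
  · rw [sum_congr rfl fun l hl ↦ if_neg (ne_of_mem_of_not_mem hl hiI)]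
    exact hstar t ht htd I hI

theorem merging_colors_lemma
    {α : Type*} [DecidableEq α] (d k m n : ℕ)
    (hd : 2 ≤ d) (hk : d + 1 ≤ k) (hm : 2 * d - 1 ≤ m) (hn : 1 ≤ n)
    (X : Finset α) (C : Fin m → Finset α)
    (hdisj : ∀ i j : Fin m, i ≠ j → Disjoint (C i) (C j))
    (hunion : Finset.univ.biUnion C = X)
    (hcard : X.card = k * n)
    (hstar : ∀ t : ℕ, 1 ≤ t → t ≤ d - 1 → ∀ I : Finset (Fin m), I.card = t →
        ∑ i ∈ I, (C i).card ≤ (k - d + t) * n) :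
    ∃ i j : Fin m, i ≠ j ∧
      -- the (m-1)-coloring obtained by merging classes `i` and `j` (indexed by
      -- `Fin m` with the index `j` removed, where class `i` becomes `C i ∪ C j`)
      -- still satisfies condition (★)
      (∀ t : ℕ, 1 ≤ t → t ≤ d - 1 → ∀ I : Finset (Fin m), j ∉ I → I.card = t →
        ∑ l ∈ I, (if l = i then (C i ∪ C j).card else (C l).card) ≤ (k - d + t) * n) :=
  merging_colors_lemma_general d k m n hd hk hm X C hdisj hunion hcard hstar
end

section
/- Let d and k be integers with d ≥ 2 and k ≥ d + 1, set m = 2d − 2, and let n be a positive multiple of 2d − 3. Let X be a set with kn elements and let X = X₁ ∪ … ∪ X_{2d−2} be the m-coloring with |X₁| = (k−d+1)n and |X₂| = |X₃| = … = |X_{2d−2}| = (d−1)n/(2d−3). Then this coloring satisfies condition (★) (for every t ∈ {1, …, d−1} and every I ⊆ {1, …, m} with |I| = t, Σ_{i∈I} |X_i| ≤ (k−d+t)n), but for every pair of distinct indices i ≠ j, the (m−1)-coloring obtained by merging X_i and X_j into a single class violates condition (★). -/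
/-!
Every class other than `X₁` has `(d - 1) r ≤ n` elements and `|X₁| = (k - d) n + n`, so a
`t`-set of classes has at most `(k - d + t) n` elements. Merging `X₁` with another class already
breaks the bound for `t = 1`; merging two small classes gives `2 (d - 1) r > (2d - 3) r = n`
elements, so together with `X₁` it breaks the bound for `t = 2`.
-/

open Finset

section

variable {ι : Type*} [DecidableEq ι]

theorem sum_le_add_card_mul_of_le_add {I : Finset ι} {s : ι → ℕ} (z : ι) {a n : ℕ}
    (hz : s z ≤ a + n) (hs : ∀ i ≠ z, s i ≤ n) : ∑ i ∈ I, s i ≤ a + #I * n := by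
  calc ∑ i ∈ I, s i ≤ ∑ i ∈ I, (n + if z = i then a else 0) := by
        refine sum_le_sum fun i _ => ?_
        by_cases h : z = i
        · subst h; simpa [add_comm] using hz
        · simpa [h] using hs i (Ne.symm h)
    _ ≤ a + #I * n := by
        rw [sum_add_distrib, sum_const, smul_eq_mul, sum_ite_eq]
        split_ifs <;> omega

theorem sum_ite_eq_add_sum {M : Type*} [AddCommMonoid M] {I : Finset ι} {i : ι} (hi : i ∈ I)
    (f : ι → M) (c : M) :
    ∑ l ∈ I, (if l = i then f i + c else f l) = c + ∑ l ∈ I, f l := by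
  calc ∑ l ∈ I, (if l = i then f i + c else f l) = ∑ l ∈ I, (f l + if l = i then c else 0) :=
        sum_congr rfl fun l _ => by split_ifs with h <;> simp [h]
    _ = c + ∑ l ∈ I, f l := by rw [sum_add_distrib, sum_ite_eq', if_pos hi, add_comm]

end

theorem merging_impossible_example_k_gt_d_general
    {α : Type*} [DecidableEq α] (d k n r : ℕ)
    (hd : 2 ≤ d) (hr : 1 ≤ r) (hn : n = (2 * d - 3) * r)
    (C : Fin (2 * d - 2) → Finset α)
    (hdisj : ∀ i j : Fin (2 * d - 2), i ≠ j → Disjoint (C i) (C j))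
    (hsize1 : ∀ i : Fin (2 * d - 2), (i : ℕ) = 0 → (C i).card = (k - d + 1) * n)
    (hsizes : ∀ i : Fin (2 * d - 2), (i : ℕ) ≠ 0 → (C i).card = (d - 1) * r) :
    -- the coloring satisfies condition (★)
    (∀ t : ℕ, 1 ≤ t → t ≤ d - 1 → ∀ I : Finset (Fin (2 * d - 2)), I.card = t →
        ∑ i ∈ I, (C i).card ≤ (k - d + t) * n) ∧
    -- but merging any two distinct classes violates condition (★)
    (∀ i j : Fin (2 * d - 2), i ≠ j →
      ¬ (∀ t : ℕ, 1 ≤ t → t ≤ d - 1 → ∀ I : Finset (Fin (2 * d - 2)), j ∉ I → I.card = t →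
          ∑ l ∈ I, (if l = i then (C i ∪ C j).card else (C l).card) ≤ (k - d + t) * n)) := by
  set z : Fin (2 * d - 2) := ⟨0, by omega⟩
  have hz : (C z).card = (k - d + 1) * n := hsize1 z rfl
  have hs : ∀ i ≠ z, (C i).card = (d - 1) * r := fun i hi => hsizes i fun h => hi (Fin.ext h)
  have hpos : 0 < (d - 1) * r := Nat.mul_pos (by omega) hr
  have hsmall : (d - 1) * r ≤ n := hn ▸ Nat.mul_le_mul_right r (by omega)
  have hlarge : n < 2 * ((d - 1) * r) := by
    rw [hn, ← mul_assoc]; exact Nat.mul_lt_mul_of_pos_right (by omega) hr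
  refine ⟨fun t _ _ I hI => ?_, fun i j hij hcond => ?_⟩
  · calc ∑ i ∈ I, (C i).card ≤ (k - d) * n + #I * n :=
          sum_le_add_card_mul_of_le_add z (by rw [hz, add_one_mul])
            fun i hi => (hs i hi).trans_le hsmall
      _ = (k - d + t) * n := by rw [hI, add_mul]
  · have hmerged : ∀ I, i ∈ I → j ∉ I → 1 ≤ #I → #I ≤ d - 1 →
        (C j).card + ∑ l ∈ I, (C l).card ≤ (k - d + #I) * n := fun I hi hj h1 h2 => by
      rw [← sum_ite_eq_add_sum hi, ← card_union_of_disjoint (hdisj i j hij)]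
      exact hcond _ h1 h2 I hj rfl
    by_cases hzij : i = z ∨ j = z
    · have h := hmerged {i} (mem_singleton_self i) (by simpa using hij.symm) (by simp)
        (by simp; omega)
      rw [sum_singleton, card_singleton] at h
      rcases hzij with rfl | rfl
      · rw [hs j (Ne.symm hij), hz] at h; omega
      · rw [hs i hij, hz] at h; omega
    · obtain ⟨hiz, hjz⟩ := not_or.mp hzij
      have hd3 : 3 ≤ d := by have := i.isLt; have := j.isLt; have := Fin.val_ne_of_ne hij; omega
      have hpair : #{z, i} = 2 := card_pair (Ne.symm hiz)
      have h := hmerged {z, i} (by simp) (by simp [hjz, hij.symm]) (by omega) (by omega)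
      rw [sum_pair (Ne.symm hiz), hpair, hs i hiz, hs j hjz, hz,
        show (k - d + 2) * n = (k - d + 1) * n + n by ring] at h
      omega

theorem merging_impossible_example_k_gt_d
    {α : Type*} [DecidableEq α] (d k n r : ℕ)
    (hd : 2 ≤ d) (hk : d + 1 ≤ k) (hr : 1 ≤ r) (hn : n = (2 * d - 3) * r)
    (X : Finset α) (C : Fin (2 * d - 2) → Finset α)
    (hdisj : ∀ i j : Fin (2 * d - 2), i ≠ j → Disjoint (C i) (C j))
    (hunion : Finset.univ.biUnion C = X)
    (hcard : X.card = k * n)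
    (hsize1 : ∀ i : Fin (2 * d - 2), (i : ℕ) = 0 → (C i).card = (k - d + 1) * n)
    (hsizes : ∀ i : Fin (2 * d - 2), (i : ℕ) ≠ 0 → (C i).card = (d - 1) * r) :
    -- the coloring satisfies condition (★)
    (∀ t : ℕ, 1 ≤ t → t ≤ d - 1 → ∀ I : Finset (Fin (2 * d - 2)), I.card = t →
        ∑ i ∈ I, (C i).card ≤ (k - d + t) * n) ∧
    -- but merging any two distinct classes violates condition (★)
    (∀ i j : Fin (2 * d - 2), i ≠ j →
      ¬ (∀ t : ℕ, 1 ≤ t → t ≤ d - 1 → ∀ I : Finset (Fin (2 * d - 2)), j ∉ I → I.card = t →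
          ∑ l ∈ I, (if l = i then (C i ∪ C j).card else (C l).card) ≤ (k - d + t) * n)) :=
  merging_impossible_example_k_gt_d_general d k n r hd hr hn C hdisj hsize1 hsizes
end

section
/- Let A and B be disjoint finite point sets in ℝ² such that A ∪ B is in general position, and let p and q be nonnegative integers. Suppose H and H′ are open halfplanes, each containing exactly p points of A, such that |H ∩ B| < q and |H′ ∩ B| > q. Then there exists an open halfplane H″ satisfying |H″ ∩ A| = p and |H″ ∩ B| = q. -/
open RealInnerProductSpace

noncomputable instance (d : ℕ) : DecidableEq (EuclideanSpace ℝ (Fin d)) := Classical.decEq _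

/-- A finite point set in `ℝ^d` is in general position if every subset
of size at most `d + 1` is affinely independent. -/
def GenPos (d : ℕ) (X : Finset (EuclideanSpace ℝ (Fin d))) : Prop :=
  ∀ S : Finset (EuclideanSpace ℝ (Fin d)), S ⊆ X → S.card ≤ d + 1 →
    AffineIndependent ℝ (fun p : S => (p : EuclideanSpace ℝ (Fin d)))

/-! Perturb `H` so that its normal `w` separates all points of `A ∪ B`. The open halfplanes
`c < ⟪·, w⟫` with exactly `p` points of `A` then realise every number of points of `B` from that
of `H` up to `maxCount`, the number of `b ∈ B` with at most `p` points of `A` weakly above `b`;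
and at `H′` no halfplane with `p` points of `A` beats `maxCount`. Moving the direction, a point of
`B` changes status only when it becomes level with a point of `A`, which general position allows
for at most one point at a time, so `maxCount` is lower semicontinuous with jumps of at most one.
On the connected set of nonzero directions it therefore equals `q` on an open set, and that set
contains a generic direction. -/

open Finset Filter Topology

section Counting

variable {α : Type*}

noncomputable def countAbove (S : Finset α) (f : α → ℝ) (c : ℝ) : ℕ := #{x ∈ S | c < f x}

noncomputable def upperCount (A : Finset α) (f : α → ℝ) (x : α) : ℕ := #{a ∈ A | f x ≤ f a}

-- For generic `f` and `p ≤ #A`, the largest number of points of `B` in a halfplane `c < f`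
-- containing exactly `p` points of `A` (see `exists_countAbove_eq_maxCount`).
noncomputable def maxCount (A B : Finset α) (p : ℕ) (f : α → ℝ) : ℕ :=
  #{x ∈ B | upperCount A f x ≤ p}

theorem countAbove_anti (S : Finset α) (f : α → ℝ) : Antitone (countAbove S f) :=
  fun _ _ h => card_le_card <| monotone_filter_right _ fun _ _ hx => h.trans_lt hx

theorem Set.InjOn.exists_card_filter_lt_eq [DecidableEq α] {β : Type*} [LinearOrder β]
    {f : α → β} :
    ∀ {S : Finset α}, Set.InjOn f S → ∀ k < #S, ∃ x ∈ S, #{y ∈ S | f x < f y} = k := by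
  intro S
  induction S using Finset.induction_on_max_value f with
  | empty => simp
  | insert a S haS hmax ih =>
    intro hf k hk
    have hlt : ∀ x ∈ S, f x < f a := fun x hx =>
      (hmax x hx).lt_of_ne fun h =>
        haS (hf (Finset.mem_insert_of_mem hx) (Finset.mem_insert_self a S) h ▸ hx)
    cases k with
    | zero =>
      refine ⟨a, Finset.mem_insert_self a S,
        card_eq_zero.2 <| filter_eq_empty_iff.2 fun y hy => ?_⟩
      rcases Finset.mem_insert.1 hy with rfl | hy
      exacts [lt_irrefl _, (hlt y hy).not_gt]
    | succ k =>
      rw [card_insert_of_notMem haS] at hk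
      obtain ⟨x, hx, hxk⟩ := ih (hf.mono (by simp)) k (by omega)
      refine ⟨x, Finset.mem_insert_of_mem hx, ?_⟩
      rw [filter_insert, if_pos (hlt x hx), card_insert_of_notMem (by simp [haS]), hxk]

theorem upperCount_lt_upperCount {A : Finset α} {f : α → ℝ} {a x y : α} (ha : a ∈ A)
    (hxa : f x ≤ f a) (hay : f a < f y) : upperCount A f y < upperCount A f x :=
  card_lt_card <| (ssubset_iff_of_subset <| monotone_filter_right _ fun _ _ h =>
    (hxa.trans hay.le).trans h).2
      ⟨a, mem_filter.2 ⟨ha, hxa⟩, fun h => (mem_filter.1 h).2.not_gt hay⟩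

theorem countAbove_le_maxCount {A B : Finset α} {f : α → ℝ} {c : ℝ} {p : ℕ}
    (hA : countAbove A f c = p) : countAbove B f c ≤ maxCount A B p f :=
  card_le_card <| monotone_filter_right _ fun _ _ hx => hA ▸
    card_le_card (monotone_filter_right _ fun _ _ ha => hx.trans_le ha)

theorem exists_countAbove_eq_maxCount [DecidableEq α] {A : Finset α} (B : Finset α)
    {f : α → ℝ} {p : ℕ} (hf : Set.InjOn f A) (hp : p ≤ #A) :
    ∃ c, countAbove A f c = p ∧ countAbove B f c = maxCount A B p f := by
  rcases hp.lt_or_eq with hp | rfl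
  · obtain ⟨a, ha, hap⟩ := hf.exists_card_filter_lt_eq p hp
    refine ⟨f a, hap, congrArg card <| filter_congr fun x _ => ⟨fun hx => ?_, fun hx => ?_⟩⟩
    · exact hap ▸ card_le_card (monotone_filter_right _ fun _ _ h => hx.trans_le h)
    · by_contra hxa
      have : insert a {b ∈ A | f a < f b} ⊆ {b ∈ A | f x ≤ f b} :=
        insert_subset (mem_filter.2 ⟨ha, not_lt.1 hxa⟩)
          (monotone_filter_right _ fun _ _ h => (not_lt.1 hxa).trans h.le)
      have := card_le_card this
      rw [card_insert_of_notMem (by simp), hap] at this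
      exact absurd hx (by unfold upperCount; omega)
  · obtain ⟨m, hm⟩ := ((A ∪ B).finite_toSet.image f).bddBelow
    have hbelow : ∀ x ∈ A ∪ B, m - 1 < f x := fun x hx =>
      (sub_one_lt m).trans_le (hm (Set.mem_image_of_mem f hx))
    refine ⟨m - 1, ?_, ?_⟩
    · exact congrArg card <| filter_true_of_mem fun x hx => hbelow x (mem_union_left _ hx)
    · unfold countAbove maxCount upperCount
      rw [filter_true_of_mem fun x hx => hbelow x (mem_union_right _ hx),
        filter_true_of_mem fun x _ => card_filter_le A _]

theorem exists_countAbove_eq_of_lt_of_le [DecidableEq α] {S : Finset α} {f : α → ℝ}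
    (hf : Set.InjOn f S) {c₀ c₁ : ℝ} {q : ℕ} (h₀ : countAbove S f c₀ < q)
    (h₁ : q ≤ countAbove S f c₁) :
    ∃ c ∈ Set.Icc c₁ c₀, countAbove S f c = q := by
  have hc : c₁ ≤ c₀ := not_lt.1 fun h => (h₁.trans (countAbove_anti S f h.le)).not_gt h₀
  rcases h₁.eq_or_lt with h₁ | h₁
  · exact ⟨c₁, ⟨le_rfl, hc⟩, h₁.symm⟩
  obtain ⟨x, hx, hxq⟩ := hf.exists_card_filter_lt_eq q (h₁.trans_le (card_filter_le _ _))
  refine ⟨f x, ⟨not_lt.1 fun h => ?_, not_lt.1 fun h => ?_⟩, hxq⟩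
  · exact (h₁.trans_le (countAbove_anti S f h.le)).ne' hxq
  · have : insert x {y ∈ S | f x < f y} ⊆ {y ∈ S | c₀ < f y} :=
      insert_subset (mem_filter.2 ⟨hx, h⟩) (monotone_filter_right _ fun _ _ hy => h.trans hy)
    have := card_le_card this
    rw [card_insert_of_notMem (by simp), hxq] at this
    exact absurd h₀ (by unfold countAbove; omega)

theorem countAbove_eq_of_mem_Icc {S : Finset α} {f : α → ℝ} {c₀ c₁ c : ℝ} {n : ℕ}
    (h₀ : countAbove S f c₀ = n) (h₁ : countAbove S f c₁ = n) (hc : c ∈ Set.Icc c₁ c₀) :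
    countAbove S f c = n :=
  le_antisymm (h₁ ▸ countAbove_anti S f hc.1) (h₀ ▸ countAbove_anti S f hc.2)

end Counting

theorem ContinuousAt.eventually_le_iff {X α : Type*} [TopologicalSpace X] [LinearOrder α]
    [TopologicalSpace α] [OrderClosedTopology α] {f g : X → α} {x₀ : X}
    (hf : ContinuousAt f x₀) (hg : ContinuousAt g x₀) (h : f x₀ ≠ g x₀) :
    ∀ᶠ x in 𝓝 x₀, (f x ≤ g x ↔ f x₀ ≤ g x₀) := by
  rcases h.lt_or_gt with h | h
  · filter_upwards [hf.eventually_lt hg h] with x hx using iff_of_true hx.le h.le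
  · filter_upwards [hg.eventually_lt hf h] with x hx using iff_of_false hx.not_ge h.not_ge

theorem IsPreconnected.exists_eventually_eq {X : Type*} [TopologicalSpace X] {S : Set X}
    (hS : IsPreconnected S) (hSo : IsOpen S) {F : X → ℕ}
    (hF : ∀ x ∈ S, ∀ᶠ y in 𝓝 x, F y ∈ Set.Icc (F x) (F x + 1)) {a b : X} (ha : a ∈ S)
    (hb : b ∈ S) {q : ℕ} (hqa : F a < q) (hqb : q ≤ F b) : ∃ x ∈ S, ∀ᶠ y in 𝓝 x, F y = q := by
  by_contra h
  have hv : ∀ x ∈ S, q ≤ F x → ∀ᶠ y in 𝓝 x, q ≤ F y := fun x hx hq =>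
    (hF x hx).mono fun _ hy => hq.trans hy.1
  -- near a point with `F < q`, a point with `F = q` would have a whole neighbourhood with `F = q`
  have hu : ∀ x ∈ S, F x < q → ∀ᶠ y in 𝓝 x, F y < q := by
    intro x hx hlt
    filter_upwards [(hF x hx).eventually_nhds, hSo.eventually_mem hx] with y hy hyS
    refine (hy.self_of_nhds.2.trans (by omega)).lt_of_ne fun hyq => h ⟨y, hyS, ?_⟩
    filter_upwards [hy, hF y hyS] with z hz hz'
    simp only [Set.mem_Icc] at hz hz'
    omega
  obtain ⟨x, -, hxu, hxv⟩ := hS {x | ∀ᶠ y in 𝓝 x, F y < q} {x | ∀ᶠ y in 𝓝 x, q ≤ F y}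
    isOpen_setOfPred_eventually_nhds isOpen_setOfPred_eventually_nhds
    (fun x hx => (lt_or_ge (F x) q).imp (hu x hx) (hv x hx)) ⟨a, ha, hu a ha hqa⟩
    ⟨b, hb, hv b hb hqb⟩
  exact hxu.self_of_nhds.not_ge hxv.self_of_nhds

section Directions

variable {V : Type*} [NormedAddCommGroup V] [InnerProductSpace ℝ V]

theorem eventually_upperCount_inner (A : Finset V) (x w₀ : V) :
    ∀ᶠ w in 𝓝 w₀, upperCount A (⟪·, w⟫) x ≤ upperCount A (⟪·, w₀⟫) x ∧
      upperCount A (⟪·, w₀⟫) x ≤ upperCount A (⟪·, w⟫) x + #{a ∈ A | ⟪a, w₀⟫ = ⟪x, w₀⟫} := by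
  classical
  have hside : ∀ᶠ w in 𝓝 w₀, ∀ a ∈ A, ⟪a, w₀⟫ ≠ ⟪x, w₀⟫ →
      (⟪x, w⟫ ≤ ⟪a, w⟫ ↔ ⟪x, w₀⟫ ≤ ⟪a, w₀⟫) := by
    refine (eventually_all_finset A).2 fun a _ => ?_
    by_cases h : ⟪a, w₀⟫ = ⟪x, w₀⟫
    · exact .of_forall fun _ h' => (h' h).elim
    · exact (ContinuousAt.eventually_le_iff (by fun_prop) (by fun_prop) (Ne.symm h)).mono
        fun _ hw _ => hw
  filter_upwards [hside] with w hw
  constructor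
  · refine card_le_card <| monotone_filter_right _ fun a ha hxa => ?_
    by_cases h : ⟪a, w₀⟫ = ⟪x, w₀⟫
    · exact h.ge
    · exact (hw a ha h).1 hxa
  · refine (card_le_card fun a ha => ?_).trans (card_union_le _ _)
    rw [mem_filter] at ha
    by_cases h : ⟪a, w₀⟫ = ⟪x, w₀⟫
    · exact mem_union_right _ (mem_filter.2 ⟨ha.1, h⟩)
    · exact mem_union_left _ (mem_filter.2 ⟨ha.1, (hw a ha.1 h).2 ha.2⟩)

theorem dense_setOf_inner_ne_zero {u : V} (hu : u ≠ 0) : Dense {w : V | ⟪u, w⟫ ≠ 0} := by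
  have : {w : V | ⟪u, w⟫ ≠ 0} = ((ℝ ∙ u)ᗮ : Set V)ᶜ := by
    ext w
    simp [Submodule.mem_orthogonal_singleton_iff_inner_right]
  rw [this, ← interior_eq_empty_iff_dense_compl, ← Set.not_nonempty_iff_eq_empty]
  intro h
  have hu' : u ∈ (ℝ ∙ u)ᗮ := Submodule.eq_top_of_nonempty_interior' _ h ▸ Submodule.mem_top
  exact hu (inner_self_eq_zero.1 (Submodule.mem_orthogonal_singleton_iff_inner_right.1 hu'))

theorem dense_setOf_injOn_inner (X : Finset V) : Dense {w : V | Set.InjOn (⟪·, w⟫) X} := by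
  classical
  have hD := (X.offDiag.finite_toSet.image fun z => {w : V | ⟪z.1 - z.2, w⟫ ≠ 0}).dense_sInter
    (by rintro _ ⟨z, -, rfl⟩; exact isOpen_ne_fun (by fun_prop) continuous_const)
    (by rintro _ ⟨z, hz, rfl⟩
        exact dense_setOf_inner_ne_zero (sub_ne_zero.2 (mem_offDiag.1 hz).2.2))
  refine hD.mono fun w hw x hx y hy hxy => by_contra fun hne => ?_
  exact hw _ ⟨(x, y), mem_offDiag.2 ⟨hx, hy, hne⟩, rfl⟩ (by simp [inner_sub_left, hxy])

theorem exists_injOn_inner_countAbove_eq (X : Finset V) {v : V} (hv : v ≠ 0) (c : ℝ) :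
    ∃ w c₀, w ≠ 0 ∧ Set.InjOn (⟪·, w⟫) X ∧
      ∀ S ⊆ X, countAbove S (⟪·, w⟫) c₀ = countAbove S (⟪·, v⟫) c := by
  obtain ⟨c₀, hc₀⟩ : ∃ c₀, ∀ x ∈ X, ⟪x, v⟫ ≠ c₀ ∧ (c₀ < ⟪x, v⟫ ↔ c < ⟪x, v⟫) := by
    refine Eventually.exists (f := 𝓝[>] c) <| (eventually_all_finset X).2 fun x _ => ?_
    rcases lt_or_ge c ⟪x, v⟫ with h | h
    · filter_upwards [nhdsWithin_le_nhds (eventually_lt_nhds h)] with c₀ h₀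
      exact ⟨h₀.ne', iff_of_true h₀ h⟩
    · filter_upwards [self_mem_nhdsWithin] with c₀ (h₀ : c < c₀)
      exact ⟨(h.trans_lt h₀).ne, iff_of_false (h.trans_lt h₀).not_gt h.not_gt⟩
  -- with no point of `X` on the boundary line, small rotations of `v` do not change the halfplane
  have hside : ∀ᶠ w in 𝓝 v, w ≠ 0 ∧ ∀ x ∈ X, (⟪x, w⟫ ≤ c₀ ↔ ⟪x, v⟫ ≤ c₀) :=
    (eventually_ne_nhds hv).and <| (eventually_all_finset X).2 fun x hx =>
      ContinuousAt.eventually_le_iff (by fun_prop) continuousAt_const (hc₀ x hx).1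
  obtain ⟨w, hgen, hw, hwX⟩ := (dense_setOf_injOn_inner X).inter_nhds_nonempty hside
  refine ⟨w, c₀, hw, hgen, fun S hS => congrArg card (filter_congr fun x hx => ?_)⟩
  rw [← (hc₀ x (hS hx)).2, ← not_le, ← not_le, hwX x (hS hx)]

end Directions

section Geometry

theorem collinear_of_inner_eq {V : Type*} [NormedAddCommGroup V] [InnerProductSpace ℝ V]
    (hV : Module.finrank ℝ V = 2) {w : V} (hw : w ≠ 0) {x y z : V}
    (hy : ⟪y, w⟫ = ⟪x, w⟫) (hz : ⟪z, w⟫ = ⟪x, w⟫) : Collinear ℝ ({x, y, z} : Set V) := by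
  have : Fact (Module.finrank ℝ V = 1 + 1) := ⟨hV⟩
  have : FiniteDimensional ℝ V := .of_fact_finrank_eq_succ 1
  have hspan : vectorSpan ℝ ({x, y, z} : Set V) ≤ (ℝ ∙ w)ᗮ := by
    rw [vectorSpan_eq_span_vsub_set_right ℝ (Set.mem_insert x _), Submodule.span_le]
    rintro _ ⟨u, hu, rfl⟩
    rw [SetLike.mem_coe, Submodule.mem_orthogonal_singleton_iff_inner_left]
    show ⟪u - x, w⟫ = 0
    rw [inner_sub_left, sub_eq_zero]
    rcases hu with rfl | rfl | rfl
    exacts [rfl, hy, hz]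
  rw [collinear_iff_finrank_le_one]
  exact (Submodule.finrank_mono hspan).trans (Submodule.finrank_orthogonal_span_singleton hw).le

theorem GenPos.not_collinear {d : ℕ} {X : Finset (EuclideanSpace ℝ (Fin d))} (hX : GenPos d X)
    (hd : 2 ≤ d) {x y z : EuclideanSpace ℝ (Fin d)} (hx : x ∈ X) (hy : y ∈ X) (hz : z ∈ X)
    (hxy : x ≠ y) (hxz : x ≠ z) (hyz : y ≠ z) : ¬Collinear ℝ ({x, y, z} : Set _) := by
  have hcard : #{x, y, z} = 2 + 1 := by
    rw [card_insert_of_notMem (by simp [hxy, hxz]), card_pair hyz]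
  have hind := hX {x, y, z} (by simp [insert_subset_iff, hx, hy, hz]) (by omega)
  have hrank := hind.finrank_vectorSpan (by simpa using hcard)
  rw [Subtype.range_coe_subtype, setOfPred_mem, coe_insert, coe_pair] at hrank
  rw [collinear_iff_finrank_le_one, hrank]
  omega

local notation "ℝ²" => EuclideanSpace ℝ (Fin 2)

theorem GenPos.inner_ne {X : Finset ℝ²} (hX : GenPos 2 X) {w : ℝ²} (hw : w ≠ 0) {x y z : ℝ²}
    (hx : x ∈ X) (hy : y ∈ X) (hz : z ∈ X) (hxy : x ≠ y) (hxz : x ≠ z) (hyz : y ≠ z)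
    (hyx : ⟪y, w⟫ = ⟪x, w⟫) : ⟪z, w⟫ ≠ ⟪x, w⟫ := fun hzx =>
  hX.not_collinear le_rfl hx hy hz hxy hxz hyz
    (collinear_of_inner_eq finrank_euclideanSpace_fin hw hyx hzx)

variable {A B : Finset ℝ²}

theorem GenPos.card_filter_inner_eq_le_one (hgp : GenPos 2 (A ∪ B)) (hAB : Disjoint A B)
    {w : ℝ²} (hw : w ≠ 0) {x : ℝ²} (hx : x ∈ B) : #{a ∈ A | ⟪a, w⟫ = ⟪x, w⟫} ≤ 1 := by
  refine card_le_one.2 fun a ha a' ha' => by_contra fun hne => ?_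
  rw [mem_filter] at ha ha'
  exact hgp.inner_ne hw (mem_union_right _ hx) (mem_union_left _ ha.1) (mem_union_left _ ha'.1)
    (fun h => disjoint_left.1 hAB ha.1 (h ▸ hx)) (fun h => disjoint_left.1 hAB ha'.1 (h ▸ hx))
    hne ha.2 ha'.2

theorem GenPos.card_tied_le_one (hgp : GenPos 2 (A ∪ B)) (hAB : Disjoint A B) {w : ℝ²}
    (hw : w ≠ 0) (k : ℕ) :
    #{x ∈ B | upperCount A (⟪·, w⟫) x = k ∧ ∃ a ∈ A, ⟪a, w⟫ = ⟪x, w⟫} ≤ 1 := by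
  refine card_le_one.2 fun x₁ h₁ x₂ h₂ => ?_
  wlog h : ⟪x₁, w⟫ ≤ ⟪x₂, w⟫ generalizing x₁ x₂
  · exact (this x₂ h₂ x₁ h₁ (le_of_not_ge h)).symm
  simp only [mem_filter] at h₁ h₂
  obtain ⟨hx₁, hk₁, a, ha, hax⟩ := h₁
  obtain ⟨hx₂, hk₂, -⟩ := h₂
  rcases h.lt_or_eq with hlt | heq
  · have := upperCount_lt_upperCount (f := (⟪·, w⟫)) ha hax.ge (hax.trans_lt hlt)
    omega
  · by_contra hne
    exact hgp.inner_ne hw (mem_union_right _ hx₁) (mem_union_right _ hx₂) (mem_union_left _ ha)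
      hne (fun h => disjoint_left.1 hAB ha (h ▸ hx₁)) (fun h => disjoint_left.1 hAB ha (h ▸ hx₂))
      heq.symm hax

theorem GenPos.eventually_maxCount_mem_Icc (hgp : GenPos 2 (A ∪ B)) (hAB : Disjoint A B)
    (p : ℕ) {w₀ : ℝ²} (hw₀ : w₀ ≠ 0) :
    ∀ᶠ w in 𝓝 w₀, maxCount A B p (⟪·, w⟫) ∈
      Set.Icc (maxCount A B p (⟪·, w₀⟫)) (maxCount A B p (⟪·, w₀⟫) + 1) := by
  filter_upwards [(eventually_all_finset B).2 fun x _ => eventually_upperCount_inner A x w₀]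
    with w hw
  refine ⟨card_le_card <| monotone_filter_right _ fun x hx h => (hw x hx).1.trans h, ?_⟩
  refine (card_le_card fun x hx => ?_).trans <| (card_union_le _ _).trans <|
    add_le_add_right (hgp.card_tied_le_one hAB hw₀ (p + 1)) _
  rw [mem_filter] at hx
  have hcount := hw x hx.1
  have htied := hgp.card_filter_inner_eq_le_one hAB hw₀ hx.1
  rw [mem_union, mem_filter, mem_filter]
  by_cases h : upperCount A (⟪·, w₀⟫) x ≤ p
  · exact .inl ⟨hx.1, h⟩
  · obtain ⟨a, ha⟩ := card_pos.1 (by omega : 0 < #{a ∈ A | ⟪a, w₀⟫ = ⟪x, w₀⟫})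
    exact .inr ⟨hx.1, by omega, a, mem_filter.1 ha⟩

theorem GenPos.exists_injOn_inner_maxCount_eq (hgp : GenPos 2 (A ∪ B)) (hAB : Disjoint A B)
    {p q : ℕ} {v₀ v₁ : ℝ²} (hv₀ : v₀ ≠ 0) (hv₁ : v₁ ≠ 0) (h₀ : maxCount A B p (⟪·, v₀⟫) < q)
    (h₁ : q ≤ maxCount A B p (⟪·, v₁⟫)) :
    ∃ w : ℝ², w ≠ 0 ∧ Set.InjOn (⟪·, w⟫) ↑(A ∪ B) ∧ maxCount A B p (⟪·, w⟫) = q := by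
  have hconn : IsConnected ({0}ᶜ : Set ℝ²) := isConnected_compl_singleton_of_one_lt_rank
    (by rw [← Module.finrank_eq_rank, finrank_euclideanSpace_fin]; norm_num) 0
  obtain ⟨x, hx, hxq⟩ := hconn.isPreconnected.exists_eventually_eq isOpen_compl_singleton
    (fun w hw => hgp.eventually_maxCount_mem_Icc hAB p hw) hv₀ hv₁ h₀ h₁
  obtain ⟨w, hgen, hwq, hw⟩ := (dense_setOf_injOn_inner (A ∪ B)).inter_nhds_nonempty
    (hxq.and (isOpen_compl_singleton.mem_nhds hx))
  exact ⟨w, hw, hgen, hwq⟩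

end Geometry

theorem halfplane_intermediate_value
    (A B : Finset (EuclideanSpace ℝ (Fin 2)))
    (hAB : Disjoint A B) (hgp : GenPos 2 (A ∪ B))
    (p q : ℕ)
    (v : EuclideanSpace ℝ (Fin 2)) (c : ℝ) (hv : v ≠ 0)
    (v' : EuclideanSpace ℝ (Fin 2)) (c' : ℝ) (hv' : v' ≠ 0)
    (hA1 : (A.filter (fun x => c < ⟪x, v⟫)).card = p)
    (hA2 : (A.filter (fun x => c' < ⟪x, v'⟫)).card = p)
    (hB1 : (B.filter (fun x => c < ⟪x, v⟫)).card < q)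
    (hB2 : q < (B.filter (fun x => c' < ⟪x, v'⟫)).card) :
    ∃ (v'' : EuclideanSpace ℝ (Fin 2)) (c'' : ℝ), v'' ≠ 0 ∧
      (A.filter (fun x => c'' < ⟪x, v''⟫)).card = p ∧
      (B.filter (fun x => c'' < ⟪x, v''⟫)).card = q := by
  obtain ⟨v₀, c₀, hv₀, hgen₀, hcount₀⟩ := exists_injOn_inner_countAbove_eq (A ∪ B) hv c
  have hA₀ : countAbove A (⟪·, v₀⟫) c₀ = p := (hcount₀ A subset_union_left).trans hA1
  have hB₀ : countAbove B (⟪·, v₀⟫) c₀ < q := (hcount₀ B subset_union_right).trans_lt hB1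
  have hq₁ : q < maxCount A B p (⟪·, v'⟫) := hB2.trans_le (countAbove_le_maxCount hA2)
  have hp : p ≤ #A := hA1 ▸ card_filter_le _ _
  rcases le_or_gt q (maxCount A B p (⟪·, v₀⟫)) with hq₀ | hq₀
  · obtain ⟨c₁, hA₁, hB₁⟩ := exists_countAbove_eq_maxCount B (hgen₀.mono (by simp)) hp
    obtain ⟨c'', hc'', hB⟩ :=
      exists_countAbove_eq_of_lt_of_le (hgen₀.mono (by simp)) hB₀ (hq₀.trans_eq hB₁.symm)
    exact ⟨v₀, c'', hv₀, countAbove_eq_of_mem_Icc hA₀ hA₁ hc'', hB⟩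
  · obtain ⟨w, hw, hgen, hwq⟩ := hgp.exists_injOn_inner_maxCount_eq hAB hv₀ hv' hq₀ hq₁.le
    obtain ⟨c'', hA, hB⟩ := exists_countAbove_eq_maxCount B (hgen.mono (by simp)) hp
    exact ⟨w, c'', hw, hA, hB.trans hwq⟩
end

section
/- Let a, b, s, t, n be positive integers with s + t = n, and set k = a + b + 1. Let A and B be disjoint finite point sets in ℝ² with A ∪ B in general position, |A| = na + s, and |B| = nb + t. Suppose that there is no open halfplane containing exactly a points of A and exactly b + 1 points of B, and no open halfplane containing exactly a + 1 points of A and exactly b points of B. Then the following two statements are equivalent: (i) every open halfplane containing exactly a points of A contains fewer than b + 1 points of B; (ii) every open halfplane containing exactly a + 1 points of A contains fewer than b points of B. -/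
open RealInnerProductSpace

/-!
After a small perturbation of its normal vector, which does not change the points a halfplane
contains, the functional `x ↦ ⟪x, v⟫` is injective on `A ∪ B`, so moving the threshold adds or
removes points one at a time. For (i) → (ii), a halfplane with `a + 1` points of `A` and at least
`b` of `B` has in fact at least `b + 1` of `B`; shrinking it, the count of `B` can never drop to `b`
while `A` keeps `a + 1` points, so when the next point of `A` leaves, at least `b + 1` points of
`B` remain. For (ii) → (i), grow a halfplane with `a` points of `A` and `b + 1` of `B` until it
picks up one more point of `A`.
-/

open Finset Filter Topology

section Sweep

variable {α : Type*} {f : α → ℝ} {c : ℝ}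

theorem filter_lt_apply_eq_erase [DecidableEq α] {s : Finset α} {x : α}
    (hinj : Set.InjOn f (insert x ↑s)) (hx : c < f x) (hmin : ∀ y ∈ s, c < f y → f x ≤ f y) :
    s.filter (fun y => f x < f y) = (s.filter (fun y => c < f y)).erase x := by
  ext y
  simp only [mem_filter, mem_erase]
  constructor
  · rintro ⟨hy, hxy⟩
    exact ⟨fun h => hxy.ne (congrArg f h.symm), hy, hx.trans hxy⟩
  · rintro ⟨hyx, hy, hcy⟩
    refine ⟨hy, (hmin y hy hcy).lt_of_ne fun h => hyx ?_⟩
    exact (hinj (Set.mem_insert _ _) (Set.mem_insert_of_mem _ hy) h).symm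

theorem exists_le_card_filter_lt_eq_add_one {s : Finset α} {a : ℕ} (hinj : Set.InjOn f s)
    (has : a < #s) (hc : #(s.filter (fun y => c < f y)) = a) :
    ∃ c' ≤ c, #(s.filter (fun y => c' < f y)) = a + 1 := by
  classical
  have hout : (s.filter (fun y => ¬ c < f y)).Nonempty := by
    rw [← card_pos]
    have := card_filter_add_card_filter_not (s := s) (fun y => c < f y)
    omega
  obtain ⟨p, hp, hmax⟩ := exists_max_image _ f hout
  rw [mem_filter, not_lt] at hp
  obtain ⟨c', hc'p, hc'⟩ : ∃ c' < f p, ∀ y ∈ s, f y < f p → f y < c' := by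
    have : ∀ᶠ c' in 𝓝[<] f p, ∀ y ∈ s, f y < f p → f y < c' :=
      nhdsWithin_le_nhds <| (eventually_all_finset s).2 fun y _ => by
        by_cases h : f y < f p
        · filter_upwards [eventually_gt_nhds h] with c' h' using fun _ => h'
        · exact Eventually.of_forall fun _ h' => absurd h' h
    exact (this.and self_mem_nhdsWithin).exists.imp fun c' h => ⟨h.2, h.1⟩
  have hinsert : s.filter (fun y => c' < f y) = insert p (s.filter (fun y => c < f y)) := by
    ext y
    simp only [mem_filter, mem_insert]
    constructor
    · rintro ⟨hy, hcy⟩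
      by_cases hcy' : c < f y
      · exact Or.inr ⟨hy, hcy'⟩
      rcases (hmax y (mem_filter.2 ⟨hy, hcy'⟩)).lt_or_eq with h | h
      · exact absurd (hc' y hy h) hcy.not_gt
      · exact Or.inl (hinj hy hp.1 h)
    · rintro (rfl | ⟨hy, hcy⟩)
      · exact ⟨hp.1, hc'p⟩
      · exact ⟨hy, by linarith⟩
  refine ⟨c', (hc'p.trans_le hp.2).le, ?_⟩
  rw [hinsert, card_insert_of_notMem (fun h => (mem_filter.1 h).2.not_ge hp.2), hc]

theorem exists_card_filter_lt_eq_of_forall_ne [DecidableEq α] {A B : Finset α} {a b : ℕ}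
    (hAB : Disjoint A B) (hinj : Set.InjOn f ↑(A ∪ B))
    (hno : ∀ c, #(A.filter (fun y => c < f y)) = a + 1 → #(B.filter (fun y => c < f y)) ≠ b)
    (hA : #(A.filter (fun y => c < f y)) = a + 1) (hB : b < #(B.filter (fun y => c < f y))) :
    ∃ c', #(A.filter (fun y => c' < f y)) = a ∧ b < #(B.filter (fun y => c' < f y)) := by
  induction hβ : #(B.filter (fun y => c < f y)) using Nat.strong_induction_on generalizing c with
  | _ β ih =>
    have hne : ((A ∪ B).filter (fun y => c < f y)).Nonempty := by
      obtain ⟨x, hx⟩ := card_pos.1 (by omega : 0 < #(A.filter (fun y => c < f y)))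
      exact ⟨x, filter_subset_filter _ subset_union_left hx⟩
    obtain ⟨x, hx, hmin⟩ := exists_min_image _ f hne
    rw [mem_filter] at hx
    have herase : ∀ s ⊆ A ∪ B,
        s.filter (fun y => f x < f y) = (s.filter (fun y => c < f y)).erase x := fun s hs =>
      filter_lt_apply_eq_erase (hinj.mono (Set.insert_subset hx.1 (by exact_mod_cast hs))) hx.2
        fun y hy hcy => hmin y (mem_filter.2 ⟨hs hy, hcy⟩)
    rcases mem_union.1 hx.1 with hxA | hxB
    · refine ⟨f x, ?_, ?_⟩
      · rw [herase A subset_union_left, card_erase_of_mem (mem_filter.2 ⟨hxA, hx.2⟩), hA]; rfl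
      · rw [herase B subset_union_right,
          erase_eq_of_notMem fun h => disjoint_left.1 hAB hxA (mem_filter.1 h).1]
        exact hB
    · have hA' : #(A.filter (fun y => f x < f y)) = a + 1 := by
        rw [herase A subset_union_left,
          erase_eq_of_notMem fun h => disjoint_right.1 hAB hxB (mem_filter.1 h).1, hA]
      have hB' : #(B.filter (fun y => f x < f y)) = β - 1 := by
        rw [herase B subset_union_right, card_erase_of_mem (mem_filter.2 ⟨hxB, hx.2⟩), hβ]
      have := hno _ hA'
      exact ih (β - 1) (by omega) hA' (by omega) hB'

end Sweep

section Perturbation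

variable {E : Type*} [NormedAddCommGroup E] [InnerProductSpace ℝ E]

theorem dense_setOf_inner_ne_zero_s11 {z : E} (hz : z ≠ 0) : Dense {w : E | ⟪z, w⟫ ≠ 0} := by
  have hker : {w : E | ⟪z, w⟫ ≠ 0}ᶜ = (LinearMap.ker (innerₛₗ ℝ z) : Set E) := by
    ext w; simp
  rw [← compl_compl {w : E | ⟪z, w⟫ ≠ 0}, ← interior_eq_empty_iff_dense_compl, hker,
    Set.eq_empty_iff_forall_notMem]
  intro w hw
  have htop := (LinearMap.ker (innerₛₗ ℝ z)).eq_top_of_nonempty_interior' ⟨w, hw⟩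
  exact hz (inner_self_eq_zero.1 (LinearMap.mem_ker.1 (htop ▸ Submodule.mem_top (x := z))))

theorem dense_setOf_injOn_inner_s11 (W : Finset E) :
    Dense {w : E | Set.InjOn (fun x => ⟪x, w⟫) W} := by
  classical
  set D := ((W ×ˢ W).filter (fun p => p.1 ≠ p.2)).image (fun p => p.1 - p.2)
  have hdense : Dense (⋂₀ ((fun z => {w : E | ⟪z, w⟫ ≠ 0}) '' D)) := by
    refine (D.finite_toSet.image _).dense_sInter ?_ ?_ <;> rintro _ ⟨z, hz, rfl⟩
    · exact isOpen_ne_fun (continuous_const.inner continuous_id) continuous_const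
    · obtain ⟨p, hp, rfl⟩ := mem_image.1 hz
      exact dense_setOf_inner_ne_zero_s11 (sub_ne_zero.2 (mem_filter.1 hp).2)
  refine hdense.mono fun w hw x hx y hy hxy => by_contra fun hne => ?_
  have hmem : x - y ∈ D := mem_image.2 ⟨(x, y), mem_filter.2 ⟨mem_product.2 ⟨hx, hy⟩, hne⟩, rfl⟩
  exact Set.mem_sInter.1 hw _ ⟨_, hmem, rfl⟩ (by simpa [inner_sub_left, sub_eq_zero] using hxy)

theorem exists_injOn_inner_filter_eq [DecidableEq E] (W : Finset E) {v : E} (hv : v ≠ 0)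
    (c : ℝ) : ∃ (v' : E) (c' : ℝ), v' ≠ 0 ∧ Set.InjOn (fun x => ⟪x, v'⟫) W ∧
      ∀ s ⊆ W, s.filter (fun x => c' < ⟪x, v'⟫) = s.filter (fun x => c < ⟪x, v⟫) := by
  -- with no point of `W` on the boundary, the halfplane is stable under small changes of `v`
  obtain ⟨c₁, hcc₁, hc₁⟩ : ∃ c₁ > c, ∀ x ∈ W, c < ⟪x, v⟫ → c₁ < ⟪x, v⟫ := by
    have : ∀ᶠ c₁ in 𝓝[>] c, ∀ x ∈ W, c < ⟪x, v⟫ → c₁ < ⟪x, v⟫ :=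
      nhdsWithin_le_nhds <| (eventually_all_finset W).2 fun x _ => by
        by_cases h : c < ⟪x, v⟫
        · filter_upwards [eventually_lt_nhds h] with c₁ h' using fun _ => h'
        · exact Eventually.of_forall fun _ h' => absurd h' h
    exact (this.and self_mem_nhdsWithin).exists.imp fun c₁ h => ⟨h.2, h.1⟩
  have hstable : ∀ᶠ w in 𝓝 v, w ≠ 0 ∧ ∀ x ∈ W, (c₁ < ⟪x, w⟫ ↔ c < ⟪x, v⟫) := by
    refine (eventually_ne_nhds hv).and ((eventually_all_finset W).2 fun x hx => ?_)
    have hcont : Continuous fun w : E => ⟪x, w⟫ := continuous_const.inner continuous_id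
    by_cases h : c < ⟪x, v⟫
    · filter_upwards [continuousAt_const.eventually_lt hcont.continuousAt (hc₁ x hx h)]
        with w hw using iff_of_true hw h
    · have hlt : ⟪x, v⟫ < c₁ := (not_lt.1 h).trans_lt hcc₁
      filter_upwards [hcont.continuousAt.eventually_lt continuousAt_const hlt]
        with w hw using iff_of_false hw.not_gt h
  obtain ⟨v', ⟨hv', hW⟩, hinj⟩ :=
    (hstable.and_frequently (mem_closure_iff_frequently.1 (dense_setOf_injOn_inner_s11 W v))).exists
  exact ⟨v', c₁, hv', hinj, fun s hs => filter_congr fun x hx => hW x (hs hx)⟩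

end Perturbation

theorem sign_agreement_observation_general
    (a b s n : ℕ) (hs : 1 ≤ s) (hn : 1 ≤ n)
    (A B : Finset (EuclideanSpace ℝ (Fin 2)))
    (hAB : Disjoint A B)
    (hA : A.card = n * a + s)
    -- no open halfplane contains exactly a+1 points of A and exactly b points of B
    (hno2 : ¬ ∃ (v : EuclideanSpace ℝ (Fin 2)) (c : ℝ), v ≠ 0 ∧
        (A.filter (fun x => c < ⟪x, v⟫)).card = a + 1 ∧
        (B.filter (fun x => c < ⟪x, v⟫)).card = b) :
    -- (i) ↔ (ii)
    ((∀ (v : EuclideanSpace ℝ (Fin 2)) (c : ℝ), v ≠ 0 →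
        (A.filter (fun x => c < ⟪x, v⟫)).card = a →
        (B.filter (fun x => c < ⟪x, v⟫)).card < b + 1)
      ↔ (∀ (v : EuclideanSpace ℝ (Fin 2)) (c : ℝ), v ≠ 0 →
        (A.filter (fun x => c < ⟪x, v⟫)).card = a + 1 →
        (B.filter (fun x => c < ⟪x, v⟫)).card < b)) := by
  push Not at hno2
  constructor
  · intro hi v c hv hAc
    by_contra! hBc
    obtain ⟨v', c', hv', hinj, hfilter⟩ := exists_injOn_inner_filter_eq (A ∪ B) hv c
    rw [← hfilter A subset_union_left] at hAc
    rw [← hfilter B subset_union_right] at hBc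
    obtain ⟨c'', hAc'', hBc''⟩ := exists_card_filter_lt_eq_of_forall_ne hAB hinj
      (fun d => hno2 v' d hv') hAc (hBc.lt_of_ne (hno2 v' c' hv' hAc).symm)
    exact (hi v' c'' hv' hAc'').not_ge hBc''
  · intro hii v c hv hAc
    by_contra! hBc
    obtain ⟨v', c', hv', hinj, hfilter⟩ := exists_injOn_inner_filter_eq (A ∪ B) hv c
    rw [← hfilter A subset_union_left] at hAc
    rw [← hfilter B subset_union_right] at hBc
    have haA : a < A.card := by nlinarith
    obtain ⟨c'', hc'', hAc''⟩ :=
      exists_le_card_filter_lt_eq_add_one (hinj.mono (by simp)) haA hAc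
    have hmono : #(B.filter (fun x => c' < ⟪x, v'⟫)) ≤ #(B.filter (fun x => c'' < ⟪x, v'⟫)) :=
      card_le_card <| monotone_filter_right B fun _ _ => hc''.trans_lt
    have := hii v' c'' hv' hAc''
    omega

theorem sign_agreement_observation
    (a b s t n k : ℕ) (ha : 1 ≤ a) (hb : 1 ≤ b) (hs : 1 ≤ s) (ht : 1 ≤ t)
    (hn : 1 ≤ n) (hst : s + t = n) (hk : k = a + b + 1)
    (A B : Finset (EuclideanSpace ℝ (Fin 2)))
    (hAB : Disjoint A B) (hgp : GenPos 2 (A ∪ B))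
    (hA : A.card = n * a + s) (hB : B.card = n * b + t)
    -- no open halfplane contains exactly a points of A and exactly b+1 points of B
    (hno1 : ¬ ∃ (v : EuclideanSpace ℝ (Fin 2)) (c : ℝ), v ≠ 0 ∧
        (A.filter (fun x => c < ⟪x, v⟫)).card = a ∧
        (B.filter (fun x => c < ⟪x, v⟫)).card = b + 1)
    -- no open halfplane contains exactly a+1 points of A and exactly b points of B
    (hno2 : ¬ ∃ (v : EuclideanSpace ℝ (Fin 2)) (c : ℝ), v ≠ 0 ∧
        (A.filter (fun x => c < ⟪x, v⟫)).card = a + 1 ∧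
        (B.filter (fun x => c < ⟪x, v⟫)).card = b) :
    -- (i) ↔ (ii)
    ((∀ (v : EuclideanSpace ℝ (Fin 2)) (c : ℝ), v ≠ 0 →
        (A.filter (fun x => c < ⟪x, v⟫)).card = a →
        (B.filter (fun x => c < ⟪x, v⟫)).card < b + 1)
      ↔ (∀ (v : EuclideanSpace ℝ (Fin 2)) (c : ℝ), v ≠ 0 →
        (A.filter (fun x => c < ⟪x, v⟫)).card = a + 1 →
        (B.filter (fun x => c < ⟪x, v⟫)).card < b)) :=
  sign_agreement_observation_general a b s n hs hn A B hAB hA hno2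
end

section
/- Let k ≥ 2 and n ≥ 1 be integers, and let X be a set with kn elements partitioned into two color classes X₁ and X₂, each containing at least n elements. Then X admits a partition into n pairwise disjoint 2-colorful k-tuples; that is, X can be partitioned into n subsets, each of size k and each containing at least one element of X₁ and at least one element of X₂. -/
/-! Peel off one block at a time. If `|X₁| + |X₂| = k (n + 1)` and both colors have at least
`n + 1` elements, take `a = min (k - 1) (|X₁| - n)` elements of `X₁` and `k - a` of `X₂`: both
numbers are positive, and each color keeps at least `n` elements (for `X₂` this uses `k ≥ 2`,
which the counts force), so induction on `n` partitions the rest. -/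

open Finset Function

section

variable {α : Type*} [DecidableEq α]

structure IsColorfulPartition {n : ℕ} (k : ℕ) (X₁ X₂ : Finset α) (P : Fin n → Finset α) :
    Prop where
  pairwise_disjoint : Pairwise (Disjoint on P)
  biUnion_eq : univ.biUnion P = X₁ ∪ X₂
  card_eq : ∀ i, (P i).card = k
  inter_left_nonempty : ∀ i, (P i ∩ X₁).Nonempty
  inter_right_nonempty : ∀ i, (P i ∩ X₂).Nonempty

lemma pairwise_disjoint_fin_cons {β : Type*} [PartialOrder β] [OrderBot β] {n : ℕ} {s : β}
    {P : Fin n → β} (hP : Pairwise (Disjoint on P)) (hs : ∀ i, Disjoint s (P i)) :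
    Pairwise (Disjoint on (Fin.cons s P : Fin (n + 1) → β)) := by
  intro i j hij
  cases i using Fin.cases <;> cases j using Fin.cases
  · exact absurd rfl hij
  · exact hs _
  · exact (hs _).symm
  · exact hP (Fin.succ_injective _ |>.ne_iff.mp hij)

lemma biUnion_fin_cons {n : ℕ} (s : Finset α) (P : Fin n → Finset α) :
    univ.biUnion (Fin.cons s P : Fin (n + 1) → Finset α) = s ∪ univ.biUnion P := by
  ext x
  simp [Fin.exists_fin_succ]

lemma exists_block_sizes {k n c₁ c₂ : ℕ} (hcard : c₁ + c₂ = k * (n + 1))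
    (h₁ : n + 1 ≤ c₁) (h₂ : n + 1 ≤ c₂) :
    ∃ a b, 0 < a ∧ 0 < b ∧ a + b = k ∧ n + a ≤ c₁ ∧ n + b ≤ c₂ := by
  have hk : 2 ≤ k := Nat.le_of_mul_le_mul_right (by omega : 2 * (n + 1) ≤ k * (n + 1)) n.succ_pos
  have hkn : 2 * n ≤ k * n := Nat.mul_le_mul_right n hk
  have hsucc : k * (n + 1) = k * n + k := mul_add_one k n
  exact ⟨min (k - 1) (c₁ - n), k - min (k - 1) (c₁ - n), by omega, by omega, by omega, by omega,
    by omega⟩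

omit [DecidableEq α] in
lemma exists_colorful_block {k n : ℕ} {X₁ X₂ : Finset α}
    (hcard : X₁.card + X₂.card = k * (n + 1)) (h₁ : n + 1 ≤ X₁.card) (h₂ : n + 1 ≤ X₂.card) :
    ∃ S₁ ⊆ X₁, ∃ S₂ ⊆ X₂, 0 < S₁.card ∧ 0 < S₂.card ∧ S₁.card + S₂.card = k ∧
      n + S₁.card ≤ X₁.card ∧ n + S₂.card ≤ X₂.card := by
  obtain ⟨a, b, ha, hb, hab, ha₁, hb₂⟩ := exists_block_sizes hcard h₁ h₂
  obtain ⟨S₁, hS₁, rfl⟩ := exists_subset_card_eq (show a ≤ X₁.card by omega)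
  obtain ⟨S₂, hS₂, rfl⟩ := exists_subset_card_eq (show b ≤ X₂.card by omega)
  exact ⟨S₁, hS₁, S₂, hS₂, ha, hb, hab, ha₁, hb₂⟩

lemma IsColorfulPartition.cons {n k : ℕ} {X₁ X₂ S₁ S₂ : Finset α} {P : Fin n → Finset α}
    (hd : Disjoint X₁ X₂) (hS₁ : S₁ ⊆ X₁) (hS₂ : S₂ ⊆ X₂) (hne₁ : S₁.Nonempty)
    (hne₂ : S₂.Nonempty) (hk : S₁.card + S₂.card = k)
    (hP : IsColorfulPartition k (X₁ \ S₁) (X₂ \ S₂) P) :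
    IsColorfulPartition k X₁ X₂ (Fin.cons (S₁ ∪ S₂) P) := by
  have hrest : Disjoint (S₁ ∪ S₂) ((X₁ \ S₁) ∪ (X₂ \ S₂)) := by
    simp only [disjoint_union_left, disjoint_union_right]
    exact ⟨⟨disjoint_sdiff, hd.symm.mono hS₂ sdiff_subset⟩, ⟨hd.mono hS₁ sdiff_subset,
      disjoint_sdiff⟩⟩
  refine ⟨pairwise_disjoint_fin_cons hP.pairwise_disjoint fun i ↦ hrest.mono_right ?_, ?_,
    fun i ↦ ?_, fun i ↦ ?_, fun i ↦ ?_⟩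
  · exact hP.biUnion_eq ▸ subset_biUnion_of_mem P (mem_univ i)
  · rw [biUnion_fin_cons, hP.biUnion_eq, union_union_union_comm, union_sdiff_of_subset hS₁,
      union_sdiff_of_subset hS₂]
  · cases i using Fin.cases
    · simpa [card_union_of_disjoint (hd.mono hS₁ hS₂)] using hk
    · simpa using hP.card_eq _
  · cases i using Fin.cases
    · exact hne₁.mono (subset_inter subset_union_left hS₁)
    · simpa using (hP.inter_left_nonempty _).mono (inter_subset_inter_left sdiff_subset)
  · cases i using Fin.cases
    · exact hne₂.mono (subset_inter subset_union_right hS₂)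
    · simpa using (hP.inter_right_nonempty _).mono (inter_subset_inter_left sdiff_subset)

theorem exists_isColorfulPartition {k : ℕ} :
    ∀ {n : ℕ} {X₁ X₂ : Finset α}, Disjoint X₁ X₂ → X₁.card + X₂.card = k * n →
      n ≤ X₁.card → n ≤ X₂.card → ∃ P : Fin n → Finset α, IsColorfulPartition k X₁ X₂ P
  | 0, X₁, X₂, _, hcard, _, _ => by
    obtain rfl : X₁ = ∅ := card_eq_zero.mp (by omega)
    obtain rfl : X₂ = ∅ := card_eq_zero.mp (by omega)
    exact ⟨Fin.elim0, fun i ↦ i.elim0, by simp, fun i ↦ i.elim0, fun i ↦ i.elim0,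
      fun i ↦ i.elim0⟩
  | n + 1, X₁, X₂, hd, hcard, h₁, h₂ => by
    obtain ⟨S₁, hS₁, S₂, hS₂, hpos₁, hpos₂, hk, h₁', h₂'⟩ := exists_colorful_block hcard h₁ h₂
    have hrest : (X₁ \ S₁).card + (X₂ \ S₂).card = k * n := by
      rw [card_sdiff_of_subset hS₁, card_sdiff_of_subset hS₂]
      have := mul_add_one k n
      omega
    obtain ⟨P, hP⟩ := exists_isColorfulPartition (hd.mono sdiff_subset sdiff_subset) hrest
      (by rw [card_sdiff_of_subset hS₁]; omega) (by rw [card_sdiff_of_subset hS₂]; omega)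
    exact ⟨_, hP.cons hd hS₁ hS₂ (card_pos.mp hpos₁) (card_pos.mp hpos₂) hk⟩

end

theorem two_color_combinatorial_partition_general
    {α : Type*} [DecidableEq α] (k n : ℕ)
    (X X₁ X₂ : Finset α)
    (hdisj : Disjoint X₁ X₂) (hX : X = X₁ ∪ X₂)
    (hcard : X.card = k * n)
    (h1 : n ≤ X₁.card) (h2 : n ≤ X₂.card) :
    ∃ P : Fin n → Finset α,
      (∀ i j, i ≠ j → Disjoint (P i) (P j)) ∧
      Finset.univ.biUnion P = X ∧
      (∀ i, (P i).card = k) ∧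
      (∀ i, ((P i) ∩ X₁).Nonempty ∧ ((P i) ∩ X₂).Nonempty) := by
  subst hX
  obtain ⟨P, hP⟩ := exists_isColorfulPartition hdisj (card_union_of_disjoint hdisj ▸ hcard) h1 h2
  exact ⟨P, hP.pairwise_disjoint, hP.biUnion_eq, hP.card_eq,
    fun i ↦ ⟨hP.inter_left_nonempty i, hP.inter_right_nonempty i⟩⟩

theorem two_color_combinatorial_partition
    {α : Type*} [DecidableEq α] (k n : ℕ) (hk : 2 ≤ k) (hn : 1 ≤ n)
    (X X₁ X₂ : Finset α)
    (hdisj : Disjoint X₁ X₂) (hX : X = X₁ ∪ X₂)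
    (hcard : X.card = k * n)
    (h1 : n ≤ X₁.card) (h2 : n ≤ X₂.card) :
    ∃ P : Fin n → Finset α,
      (∀ i j, i ≠ j → Disjoint (P i) (P j)) ∧
      Finset.univ.biUnion P = X ∧
      (∀ i, (P i).card = k) ∧
      (∀ i, ((P i) ∩ X₁).Nonempty ∧ ((P i) ∩ X₂).Nonempty) :=
  two_color_combinatorial_partition_general k n X X₁ X₂ hdisj hX hcard h1 h2
end

section
/- Let d ≥ 2 and n ≥ 1 be integers, and let X be a set with (d+1)n elements partitioned into d color classes X₁, …, X_d, each containing at least n elements. Then X admits a partition into n pairwise disjoint d-colorful (d+1)-tuples; that is, X can be partitioned into n subsets, each of size d + 1 and each containing at least one element of every color class X₁, …, X_d. -/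
private lemma d_color_aux {α : Type*} [DecidableEq α] (d : ℕ) :
    ∀ (n : ℕ) (X : Finset α) (C : Fin d → Finset α),
      (∀ i j : Fin d, i ≠ j → Disjoint (C i) (C j)) →
      Finset.univ.biUnion C = X →
      X.card = (d + 1) * n →
      (∀ i : Fin d, n ≤ (C i).card) →
      ∃ P : Fin n → Finset α,
        (∀ i j, i ≠ j → Disjoint (P i) (P j)) ∧
        Finset.univ.biUnion P = X ∧
        (∀ i, (P i).card = d + 1) ∧
        (∀ i, ∀ c : Fin d, ((P i) ∩ C c).Nonempty) := by
  intro n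
  induction n with
  | zero =>
    intro X C hdisj hunion hcard hsizes
    have hX : X = ∅ := Finset.card_eq_zero.mp (by simpa using hcard)
    refine ⟨fun i => i.elim0, fun i => i.elim0, ?_, fun i => i.elim0, fun i => i.elim0⟩
    simp [hX]
  | succ n ih =>
    intro X C hdisj hunion hcard hsizes
    have hsum : ∑ i, (C i).card = (d + 1) * (n + 1) := by
      rw [← hcard, ← hunion]
      exact (Finset.card_biUnion (fun i _ j _ h => hdisj i j h)).symm
    -- pigeonhole: some class has ≥ n+2 elements
    obtain ⟨j, hj⟩ : ∃ j, n + 2 ≤ (C j).card := by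
      by_contra h
      push_neg at h
      have hle : ∑ i, (C i).card ≤ ∑ _i : Fin d, (n + 1) :=
        Finset.sum_le_sum (fun i _ => Nat.lt_succ_iff.mp (h i))
      simp only [Finset.sum_const, Finset.card_univ, Fintype.card_fin, smul_eq_mul] at hle
      rw [hsum] at hle
      nlinarith
    have hne : ∀ i, (C i).Nonempty := fun i =>
      Finset.card_pos.mp (lt_of_lt_of_le (Nat.succ_pos n) (hsizes i))
    set x : Fin d → α := fun i => (hne i).choose with hxdef
    have hx : ∀ i, x i ∈ C i := fun i => (hne i).choose_spec
    have hxinj : Function.Injective x := by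
      intro a b hab
      by_contra hne2
      exact Finset.disjoint_left.mp (hdisj a b hne2) (hx a) (hab ▸ hx b)
    have herase : ((C j).erase (x j)).Nonempty := by
      rw [← Finset.card_pos, Finset.card_erase_of_mem (hx j)]
      omega
    obtain ⟨y, hy⟩ := herase
    have hyne : y ≠ x j := (Finset.mem_erase.mp hy).1
    have hyC : y ∈ C j := (Finset.mem_erase.mp hy).2
    set G : Finset α := insert y (Finset.univ.image x) with hGdef
    have hyG : y ∉ Finset.univ.image x := by
      intro hmem
      obtain ⟨i, _, hi⟩ := Finset.mem_image.mp hmem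
      rcases eq_or_ne i j with rfl | hij
      · exact hyne hi.symm
      · exact Finset.disjoint_left.mp (hdisj i j hij) (hi ▸ hx i) hyC
    have hGcard : G.card = d + 1 := by
      rw [hGdef, Finset.card_insert_of_notMem hyG,
        Finset.card_image_of_injective _ hxinj, Finset.card_univ, Fintype.card_fin]
    have hCsubX : ∀ i, C i ⊆ X := fun i => hunion ▸ Finset.subset_biUnion_of_mem C (Finset.mem_univ i)
    have hGsub : G ⊆ X := by
      intro a ha
      rw [hGdef] at ha
      rcases Finset.mem_insert.mp ha with rfl | ha
      · exact hCsubX j hyC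
      · obtain ⟨i, _, rfl⟩ := Finset.mem_image.mp ha
        exact hCsubX i (hx i)
    -- intersections of classes with G
    have hinter : ∀ i : Fin d, i ≠ j → C i ∩ G ⊆ {x i} := by
      intro i hij a ha
      obtain ⟨haC, haG⟩ := Finset.mem_inter.mp ha
      rw [hGdef] at haG
      rcases Finset.mem_insert.mp haG with rfl | haG
      · exact absurd haC (Finset.disjoint_right.mp (hdisj i j hij) hyC)
      · obtain ⟨k, _, rfl⟩ := Finset.mem_image.mp haG
        rcases eq_or_ne k i with rfl | hki
        · exact Finset.mem_singleton_self _
        · exact absurd haC (Finset.disjoint_left.mp (hdisj k i hki) (hx k))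
    have hinterj : C j ∩ G ⊆ {x j, y} := by
      intro a ha
      obtain ⟨haC, haG⟩ := Finset.mem_inter.mp ha
      rw [hGdef] at haG
      rcases Finset.mem_insert.mp haG with rfl | haG
      · simp
      · obtain ⟨k, _, rfl⟩ := Finset.mem_image.mp haG
        rcases eq_or_ne k j with rfl | hkj
        · simp
        · exact absurd haC (Finset.disjoint_left.mp (hdisj k j hkj) (hx k))
    set C' : Fin d → Finset α := fun i => C i \ G with hC'def
    set X' : Finset α := X \ G with hX'def
    have hC'card : ∀ i, n ≤ (C' i).card := by
      intro i
      have heq : C i \ G = C i \ (C i ∩ G) := by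
        rw [Finset.sdiff_inter_self_left]
      have hcardeq : (C' i).card = (C i).card - (C i ∩ G).card := by
        rw [hC'def]
        simp only
        rw [heq, Finset.card_sdiff_of_subset Finset.inter_subset_left]
      rcases eq_or_ne i j with rfl | hij
      · have : (C i ∩ G).card ≤ 2 := le_trans (Finset.card_le_card hinterj)
          (Finset.card_insert_le _ _ |>.trans (by simp))
        have := hsizes i
        omega
      · have : (C i ∩ G).card ≤ 1 := le_trans (Finset.card_le_card (hinter i hij)) (by simp)
        have := hsizes i
        omega
    have hC'disj : ∀ i k : Fin d, i ≠ k → Disjoint (C' i) (C' k) := fun i k h =>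
      (hdisj i k h).mono Finset.sdiff_subset Finset.sdiff_subset
    have hC'union : Finset.univ.biUnion C' = X' := by
      ext a
      simp only [Finset.mem_biUnion, Finset.mem_univ, true_and, hC'def, hX'def,
        Finset.mem_sdiff]
      rw [← hunion]
      simp only [Finset.mem_biUnion, Finset.mem_univ, true_and]
      constructor
      · rintro ⟨i, hi, hg⟩; exact ⟨⟨i, hi⟩, hg⟩
      · rintro ⟨⟨i, hi⟩, hg⟩; exact ⟨i, hi, hg⟩
    have hX'card : X'.card = (d + 1) * n := by
      rw [hX'def, Finset.card_sdiff_of_subset hGsub, hcard, hGcard, Nat.mul_succ]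
      omega
    obtain ⟨P', hP'disj, hP'union, hP'card, hP'color⟩ :=
      ih X' C' hC'disj hC'union hX'card hC'card
    have hP'subX' : ∀ i, P' i ⊆ X' := fun i =>
      hP'union ▸ Finset.subset_biUnion_of_mem P' (Finset.mem_univ i)
    refine ⟨Fin.cons G P', ?_, ?_, ?_, ?_⟩
    · intro i k hik
      induction i using Fin.cases with
      | zero =>
        induction k using Fin.cases with
        | zero => exact absurd rfl hik
        | succ k =>
          simp only [Fin.cons_zero, Fin.cons_succ]
          exact (Finset.disjoint_sdiff.mono_right (hP'subX' k))
      | succ i =>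
        induction k using Fin.cases with
        | zero =>
          simp only [Fin.cons_zero, Fin.cons_succ]
          exact (Finset.disjoint_sdiff.mono_right (hP'subX' i)).symm
        | succ k =>
          simp only [Fin.cons_succ]
          exact hP'disj i k (fun h => hik (by rw [h]))
    · ext a
      simp only [Finset.mem_biUnion, Finset.mem_univ, true_and]
      rw [Fin.exists_fin_succ]
      simp only [Fin.cons_zero, Fin.cons_succ]
      constructor
      · rintro (h | ⟨i, hi⟩)
        · exact hGsub h
        · exact Finset.sdiff_subset (hP'subX' i hi)
      · intro ha
        by_cases hg : a ∈ G
        · exact Or.inl hg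
        · have : a ∈ X' := Finset.mem_sdiff.mpr ⟨ha, hg⟩
          rw [← hP'union] at this
          obtain ⟨i, _, hi⟩ := Finset.mem_biUnion.mp this
          exact Or.inr ⟨i, hi⟩
    · intro i
      induction i using Fin.cases with
      | zero => simpa using hGcard
      | succ i => simpa using hP'card i
    · intro i c
      induction i using Fin.cases with
      | zero =>
        refine ⟨x c, Finset.mem_inter.mpr ⟨?_, hx c⟩⟩
        simp only [Fin.cons_zero, hGdef]
        exact Finset.mem_insert_of_mem (Finset.mem_image_of_mem x (Finset.mem_univ c))
      | succ i =>
        obtain ⟨a, ha⟩ := hP'color i c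
        obtain ⟨h1, h2⟩ := Finset.mem_inter.mp ha
        exact ⟨a, Finset.mem_inter.mpr ⟨by simpa using h1, Finset.sdiff_subset h2⟩⟩

theorem d_color_combinatorial_partition
    {α : Type*} [DecidableEq α] (d n : ℕ) (hd : 2 ≤ d) (hn : 1 ≤ n)
    (X : Finset α) (C : Fin d → Finset α)
    (hdisj : ∀ i j : Fin d, i ≠ j → Disjoint (C i) (C j))
    (hunion : Finset.univ.biUnion C = X)
    (hcard : X.card = (d + 1) * n)
    (hsizes : ∀ i : Fin d, n ≤ (C i).card) :
    ∃ P : Fin n → Finset α,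
      (∀ i j, i ≠ j → Disjoint (P i) (P j)) ∧
      Finset.univ.biUnion P = X ∧
      (∀ i, (P i).card = d + 1) ∧
      (∀ i, ∀ c : Fin d, ((P i) ∩ C c).Nonempty) := by
  exact d_color_aux d n X C hdisj hunion hcard hsizes
end
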